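/- arXiv:1906.02026 — 6 statements merged into one kernel-verified Lean document; each statement's English description precedes it below -/
import Mathlib

section
/- Let f : ℝ → ℝ be twice continuously differentiable, fix an interval [a₀, b₀] with a₀ < b₀, and let c₀ ∈ (a₀, b₀) be a mean value abscissa for f on [a₀, b₀]. Suppose f''(c₀) ≠ 0. Then there exist δ > 0, ε > 0, and a continuously differentiable function C : (b₀ - δ, b₀ + δ) → ℝ with C(b₀) = c₀ such that (f(b) - f(a₀))/(b - a₀) = f'(C(b)) for all b with |b - b₀| < δ; moreover, if |b - b₀| < δ, |c - c₀| < ε, and (f(b) - f(a₀))/(b - a₀) = f'(c), then c = C(b). -/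
/-!
Mean value abscissae `c` for `[a₀, b]` are the solutions of `f' c = slope f a₀ b`. Since
`f''(c₀) ≠ 0`, the inverse function theorem gives a `C¹` local inverse `g` of `f'` near `c₀`;
then `C = g ∘ slope f a₀` works, and local injectivity of `f'` gives uniqueness.
-/

open Filter Topology
open scoped ContDiff

theorem ContDiffAt.exists_localInverse {𝕂 : Type*} [RCLike 𝕂] {n : WithTop ℕ∞} {f : 𝕂 → 𝕂}
    {a : 𝕂} (hf : ContDiffAt 𝕂 n f a) (hn : n ≠ 0) (hn' : n ≠ ∞) (ha : deriv f a ≠ 0) :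
    ∃ g : 𝕂 → 𝕂, (∀ᶠ x in 𝓝 a, g (f x) = x) ∧
      ∀ᶠ y in 𝓝 (f a), f (g y) = y ∧ ContDiffAt 𝕂 n g y := by
  have hF := ((hf.differentiableAt hn).hasDerivAt).hasFDerivAt_equiv ha
  have hS := hf.hasStrictFDerivAt' hF hn
  exact ⟨hf.localInverse hF hn, hS.eventually_left_inverse,
    hS.eventually_right_inverse.and ((hf.to_localInverse hF hn).eventually hn')⟩

theorem contDiffAt_slope {𝕜 : Type*} [NontriviallyNormedField 𝕜] {E : Type*}
    [NormedAddCommGroup E] [NormedSpace 𝕜 E] {n : WithTop ℕ∞} {f : 𝕜 → E} {a b : 𝕜}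
    (hf : ContDiffAt 𝕜 n f b) (hb : b ≠ a) : ContDiffAt 𝕜 n (slope f a) b := by
  rw [show slope f a = fun y ↦ (y - a)⁻¹ • (f y - f a) from funext (slope_def_module f a)]
  exact ((contDiffAt_id.sub contDiffAt_const).inv (sub_ne_zero.2 hb)).smul
    (hf.sub contDiffAt_const)

theorem mean_value_abscissa_of_second_deriv_ne_zero_general
    (f : ℝ → ℝ) (hf : ContDiff ℝ 2 f)
    (a₀ b₀ c₀ : ℝ) (hab : a₀ < b₀)
    (hmv : (f b₀ - f a₀) / (b₀ - a₀) = deriv f c₀)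
    (hf'' : deriv (deriv f) c₀ ≠ 0) :
    ∃ δ > 0, ∃ ε > 0, ∃ C : ℝ → ℝ,
      C b₀ = c₀ ∧
      ContDiffOn ℝ 1 C (Set.Ioo (b₀ - δ) (b₀ + δ)) ∧
      (∀ b : ℝ, |b - b₀| < δ → (f b - f a₀) / (b - a₀) = deriv f (C b)) ∧
      (∀ b c : ℝ, |b - b₀| < δ → |c - c₀| < ε →
        (f b - f a₀) / (b - a₀) = deriv f c → c = C b) := by
  simp only [← slope_def_field] at hmv ⊢
  obtain ⟨g, hleft, hright⟩ :=
    (hf.deriv' (n := 1)).contDiffAt.exists_localInverse one_ne_zero (by simp) hf''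
  have hslope {b : ℝ} (hb : b ≠ a₀) : ContDiffAt ℝ 1 (slope f a₀) b :=
    contDiffAt_slope (hf.of_le one_le_two).contDiffAt hb
  have hnear : ∀ᶠ b in 𝓝 b₀, b ≠ a₀ ∧ deriv f (g (slope f a₀ b)) = slope f a₀ b ∧
      ContDiffAt ℝ 1 g (slope f a₀ b) := by
    have hcont := (hslope hab.ne').continuousAt
    rw [ContinuousAt, hmv] at hcont
    exact (eventually_ne_nhds hab.ne').and (hcont.eventually hright)
  obtain ⟨δ, hδ, hδnear⟩ := Metric.eventually_nhds_iff.mp hnear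
  obtain ⟨ε, hε, hεleft⟩ := Metric.eventually_nhds_iff.mp hleft
  refine ⟨δ, hδ, ε, hε, g ∘ slope f a₀, by simp [hmv, hleft.self_of_nhds], ?_, ?_, ?_⟩
  · intro b hb
    rw [← Real.ball_eq_Ioo] at hb
    obtain ⟨hba, -, hg⟩ := hδnear hb
    exact (hg.comp b (hslope hba)).contDiffWithinAt
  · exact fun b hb ↦ (hδnear (by rwa [Real.dist_eq])).2.1.symm
  · intro b c _ hc hbc
    rw [Function.comp_apply, hbc, hεleft (by rwa [Real.dist_eq])]

/-- Theorem (main I, part a): if `f` is twice continuously differentiable, `c₀` is a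
mean value abscissa for `f` on `[a₀, b₀]`, and `f''(c₀) ≠ 0`, then the mean value
abscissa can locally be written as a continuously differentiable function `C` of the
right endpoint `b`, and nearby solutions are unique. -/
theorem mean_value_abscissa_of_second_deriv_ne_zero
    (f : ℝ → ℝ) (hf : ContDiff ℝ 2 f)
    (a₀ b₀ c₀ : ℝ) (hab : a₀ < b₀) (hc : c₀ ∈ Set.Ioo a₀ b₀)
    (hmv : (f b₀ - f a₀) / (b₀ - a₀) = deriv f c₀)
    (hf'' : deriv (deriv f) c₀ ≠ 0) :
    ∃ δ > 0, ∃ ε > 0, ∃ C : ℝ → ℝ,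
      C b₀ = c₀ ∧
      ContDiffOn ℝ 1 C (Set.Ioo (b₀ - δ) (b₀ + δ)) ∧
      (∀ b : ℝ, |b - b₀| < δ → (f b - f a₀) / (b - a₀) = deriv f (C b)) ∧
      (∀ b c : ℝ, |b - b₀| < δ → |c - c₀| < ε →
        (f b - f a₀) / (b - a₀) = deriv f c → c = C b) :=
  mean_value_abscissa_of_second_deriv_ne_zero_general f hf a₀ b₀ c₀ hab hmv hf''
end

section
/- Let G : ℝ² → ℝ be three-times continuously differentiable on a neighborhood of the origin with G(0,0) = G_x(0,0) = G_y(0,0) = 0 and G_{xx}(0,0)·G_{yy}(0,0) - (G_{xy}(0,0))² ≠ 0. Then there exist open neighborhoods U and V of the origin in ℝ², a map Φ : U → V with Φ(0,0) = (0,0) which is a bijection onto V such that both Φ and its inverse are continuously differentiable, and signs ε₁, ε₂ ∈ {+1, -1}, such that for all (x, y) ∈ U, writing (u, v) = Φ(x, y), one has G(x, y) = ε₁·u² + ε₂·v². -/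
open Set Metric Filter Topology Function

/-- Partial derivative of `G : ℝ → ℝ → ℝ` with respect to the first variable. -/
noncomputable def pdx (G : ℝ → ℝ → ℝ) (x y : ℝ) : ℝ := deriv (fun t => G t y) x

/-- Partial derivative of `G : ℝ → ℝ → ℝ` with respect to the second variable. -/
noncomputable def pdy (G : ℝ → ℝ → ℝ) (x y : ℝ) : ℝ := deriv (fun t => G x t) y

/-!
Hadamard's lemma writes `F p = Q p p p` with `Q p = ∫₀¹ (1 - t) • D²F (t • p) dt`. Since `F` is
`C³`, `Q` is a `C¹` family of bilinear forms, and `Q 0 = D²F 0 / 2` is nondegenerate. After a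
shear making the coefficient `A` of `x²` nonzero at the origin, complete the square,
`A x² + 2 B x y + C y² = A (x + (B / A) y)² + ((A C - B²) / A) y²`, and take
`u = √|A| (x + (B / A) y)`, `v = √|(A C - B²) / A| y`. The derivative of `(u, v)` at the origin is
triangular with nonzero diagonal, so by the inverse function theorem `(u, v)` is a local
`C¹` diffeomorphism.
-/

section ParametricIntegral

variable {E F : Type*} [NormedAddCommGroup E] [NormedSpace ℝ E] [NormedAddCommGroup F]
  {r : ℝ} {p : E}

lemma smul_mem_ball_zero (hp : p ∈ ball 0 r) {t : ℝ} (ht : t ∈ Icc (0 : ℝ) 1) :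
    t • p ∈ ball 0 r :=
  (convex_ball 0 r).smul_mem_of_zero_mem (mem_ball_self (pos_of_mem_ball hp)) hp ht

lemma exists_forall_norm_comp_smul_le [ProperSpace E] {h : E → F}
    (hh : ContinuousOn h (ball 0 r)) (hp : p ∈ ball 0 r) :
    ∃ ε > 0, ∃ M, ∀ x ∈ ball p ε, ∀ t ∈ Icc (0 : ℝ) 1, ‖h (t • x)‖ ≤ M := by
  have hpr : ‖p‖ < r := mem_ball_zero_iff.mp hp
  obtain ⟨ρ, hpρ, hρr⟩ := exists_between hpr
  obtain ⟨M, hM⟩ := (isCompact_closedBall (0 : E) ρ).exists_bound_of_continuousOn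
    (hh.mono (closedBall_subset_ball hρr))
  refine ⟨ρ - ‖p‖, by linarith, M, fun x hx t ht => hM _ ?_⟩
  have hxρ : x ∈ ball (0 : E) ρ :=
    ball_subset_ball' (by rw [dist_zero_right]; linarith) hx
  exact ball_subset_closedBall (smul_mem_ball_zero hxρ ht)

variable [NormedSpace ℝ F] {w : ℝ → ℝ}

lemma intervalIntegrable_smul_comp_smul (hw : Continuous w) {h : E → F}
    (hh : ContinuousOn h (ball 0 r)) (hp : p ∈ ball 0 r) :
    IntervalIntegrable (fun t => w t • h (t • p)) MeasureTheory.volume 0 1 :=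
  (hw.continuousOn.smul (hh.comp (by fun_prop) fun _ ht => smul_mem_ball_zero hp ht))
    |>.intervalIntegrable_of_Icc zero_le_one

lemma continuousOn_integral_smul_comp_smul [ProperSpace E] (hw : Continuous w) {h : E → F}
    (hh : ContinuousOn h (ball 0 r)) :
    ContinuousOn (fun x => ∫ t in (0 : ℝ)..1, w t • h (t • x)) (ball 0 r) := by
  intro p hp
  obtain ⟨ε, hε, M, hM⟩ := exists_forall_norm_comp_smul_le hh hp
  refine (intervalIntegral.continuousAt_of_dominated_interval (bound := fun t => ‖w t‖ * M)
    ?_ ?_ ((by fun_prop : Continuous fun t => ‖w t‖ * M).intervalIntegrable _ _) ?_)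
    |>.continuousWithinAt
  · filter_upwards [isOpen_ball.mem_nhds hp] with x hx
    exact (intervalIntegrable_smul_comp_smul hw hh hx).def'.aestronglyMeasurable
  · filter_upwards [ball_mem_nhds p hε] with x hx
    refine Eventually.of_forall fun t ht => ?_
    rw [uIoc_of_le zero_le_one] at ht
    exact (norm_smul_le _ _).trans
      (mul_le_mul_of_nonneg_left (hM x hx t (Ioc_subset_Icc_self ht)) (norm_nonneg _))
  · refine Eventually.of_forall fun t ht => ?_
    rw [uIoc_of_le zero_le_one] at ht
    have hmem := smul_mem_ball_zero hp (Ioc_subset_Icc_self ht)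
    exact ((hh.continuousAt (isOpen_ball.mem_nhds hmem)).comp (by fun_prop)).const_smul (w t)

lemma hasFDerivAt_integral_smul_comp_smul [ProperSpace E] (hw : Continuous w) {g : E → F}
    (hg : ContDiffOn ℝ 1 g (ball 0 r)) (hp : p ∈ ball 0 r) :
    HasFDerivAt (fun x => ∫ t in (0 : ℝ)..1, w t • g (t • x))
      (∫ t in (0 : ℝ)..1, (w t * t) • fderiv ℝ g (t • p)) p := by
  have hg' := hg.continuousOn_fderiv_of_isOpen isOpen_ball le_rfl
  obtain ⟨ε, hε, M, hM⟩ := exists_forall_norm_comp_smul_le hg' hp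
  have hnhds : ball p ε ∩ ball 0 r ∈ 𝓝 p :=
    inter_mem (ball_mem_nhds p hε) (isOpen_ball.mem_nhds hp)
  have hmeas := (intervalIntegrable_smul_comp_smul (w := fun t => w t * t) (by fun_prop) hg' hp)
    |>.def'.aestronglyMeasurable
  refine intervalIntegral.hasFDerivAt_integral_of_dominated_of_fderiv_le
    (F' := fun x t => (w t * t) • fderiv ℝ g (t • x)) (bound := fun t => ‖w t * t‖ * M)
    hnhds ?_ (intervalIntegrable_smul_comp_smul hw hg.continuousOn hp) hmeas ?_
    ((by fun_prop : Continuous fun t => ‖w t * t‖ * M).intervalIntegrable _ _) ?_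
  · filter_upwards [isOpen_ball.mem_nhds hp] with x hx
    exact (intervalIntegrable_smul_comp_smul hw hg.continuousOn hx).def'.aestronglyMeasurable
  · refine Eventually.of_forall fun t ht x hx => ?_
    rw [uIoc_of_le zero_le_one] at ht
    exact (norm_smul_le _ _).trans
      (mul_le_mul_of_nonneg_left (hM x hx.1 t (Ioc_subset_Icc_self ht)) (norm_nonneg _))
  · refine Eventually.of_forall fun t ht x hx => ?_
    rw [uIoc_of_le zero_le_one] at ht
    have hmem := smul_mem_ball_zero hx.2 (Ioc_subset_Icc_self ht)
    have hgx := (hg.differentiableOn one_ne_zero).differentiableAt (isOpen_ball.mem_nhds hmem)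
    convert (hgx.hasFDerivAt.comp x ((hasFDerivAt_id x).const_smul t)).const_smul (w t) using 1
    · rfl
    · ext v
      simp [mul_smul]

theorem contDiffOn_integral_smul_comp_smul [ProperSpace E] (hw : Continuous w) {g : E → F}
    (hg : ContDiffOn ℝ 1 g (ball 0 r)) :
    ContDiffOn ℝ 1 (fun x => ∫ t in (0 : ℝ)..1, w t • g (t • x)) (ball 0 r) := by
  have hderiv := fun p (hp : p ∈ ball (0 : E) r) => hasFDerivAt_integral_smul_comp_smul hw hg hp
  rw [show (1 : WithTop ℕ∞) = 0 + 1 from rfl, contDiffOn_succ_iff_fderiv_of_isOpen isOpen_ball]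
  refine ⟨fun p hp => (hderiv p hp).differentiableAt.differentiableWithinAt, by simp, ?_⟩
  rw [contDiffOn_zero]
  exact (continuousOn_integral_smul_comp_smul (w := fun t => w t * t) (by fun_prop)
    (hg.continuousOn_fderiv_of_isOpen isOpen_ball le_rfl)).congr fun p hp => (hderiv p hp).fderiv

theorem eq_integral_fderiv_fderiv_apply_apply [CompleteSpace F] {f : E → F}
    (hf : ContDiffOn ℝ 2 f (ball 0 r)) (hf0 : f 0 = 0) (hdf : fderiv ℝ f 0 = 0)
    (hp : p ∈ ball 0 r) :
    f p = (∫ t in (0 : ℝ)..1, (1 - t) • fderiv ℝ (fderiv ℝ f) (t • p)) p p := by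
  have hf' : ContDiffOn ℝ 1 (fderiv ℝ f) (ball 0 r) :=
    hf.fderiv_of_isOpen isOpen_ball (by norm_num)
  have hf'' := hf'.continuousOn_fderiv_of_isOpen isOpen_ball le_rfl
  have hline : ∀ t : ℝ, HasDerivAt (fun s : ℝ => s • p) p t := fun t => by
    simpa using (hasDerivAt_id t).smul_const p
  have hderiv : ∀ t ∈ uIcc (0 : ℝ) 1, HasDerivAt
      (fun s : ℝ => f (s • p) + (1 - s) • fderiv ℝ f (s • p) p)
      ((1 - t) • fderiv ℝ (fderiv ℝ f) (t • p) p p) t := by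
    intro t ht
    rw [uIcc_of_le zero_le_one] at ht
    have hmem := isOpen_ball.mem_nhds (smul_mem_ball_zero hp ht)
    have h1 : HasDerivAt (fun s : ℝ => f (s • p)) (fderiv ℝ f (t • p) p) t :=
      ((hf.differentiableOn (by norm_num)).differentiableAt hmem).hasFDerivAt.comp_hasDerivAt t
        (hline t)
    have h2 : HasDerivAt (fun s : ℝ => fderiv ℝ f (s • p))
        (fderiv ℝ (fderiv ℝ f) (t • p) p) t :=
      ((hf'.differentiableOn one_ne_zero).differentiableAt hmem).hasFDerivAt.comp_hasDerivAt t
        (hline t)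
    have h3 : HasDerivAt (fun s : ℝ => fderiv ℝ f (s • p) p)
        (fderiv ℝ (fderiv ℝ f) (t • p) p p) t := by
      simpa using h2.clm_apply (hasDerivAt_const t p)
    convert h1.add (((hasDerivAt_id t).const_sub 1).smul h3) using 1
    · rfl
    · simp
  have hint : IntervalIntegrable (fun t => (1 - t) • fderiv ℝ (fderiv ℝ f) (t • p) p p)
      MeasureTheory.volume 0 1 :=
    intervalIntegrable_smul_comp_smul (h := fun q => fderiv ℝ (fderiv ℝ f) q p p) (by fun_prop)
      ((hf''.clm_apply continuousOn_const).clm_apply continuousOn_const) hp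
  rw [ContinuousLinearMap.intervalIntegral_apply
      (intervalIntegrable_smul_comp_smul (by fun_prop) hf'' hp)]
  simp only [smul_apply]
  rw [ContinuousLinearMap.intervalIntegral_apply
      (intervalIntegrable_smul_comp_smul (h := fun q => fderiv ℝ (fderiv ℝ f) q p)
        (by fun_prop) (hf''.clm_apply continuousOn_const) hp)]
  simp only [smul_apply]
  rw [intervalIntegral.integral_eq_sub_of_hasDerivAt hderiv hint]
  simp [hf0, hdf]

lemma integral_one_sub_smul_const [CompleteSpace F] (c : F) :
    ∫ t in (0 : ℝ)..1, (1 - t) • c = (1 / 2 : ℝ) • c := by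
  rw [intervalIntegral.integral_smul_const, intervalIntegral.integral_sub intervalIntegrable_const
    intervalIntegral.intervalIntegrable_id]
  norm_num

end ParametricIntegral

lemma ContDiffAt.hasFDerivAt_fderiv_apply {E F : Type*} [NormedAddCommGroup E]
    [NormedSpace ℝ E] [NormedAddCommGroup F] [NormedSpace ℝ F] {f : E → F} {a : E}
    (hf : ContDiffAt ℝ 2 f a) (v : E) :
    HasFDerivAt (fun q => fderiv ℝ f q v) ((fderiv ℝ (fderiv ℝ f) a).flip v) a := by
  have hD := ((hf.fderiv_right (m := 1) le_rfl).differentiableAt one_ne_zero).hasFDerivAt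
  exact (hD.clm_apply (hasFDerivAt_const v a)).congr_fderiv (by simp)

section PartialDerivatives

variable {G : ℝ → ℝ → ℝ} {x y : ℝ}

lemma pdx_eq_of_hasFDerivAt {L : ℝ × ℝ →L[ℝ] ℝ} (h : HasFDerivAt (uncurry G) L (x, y)) :
    pdx G x y = L (1, 0) :=
  (h.comp_hasDerivAt (f := fun t => (t, y)) x
    ((hasDerivAt_id' x).prodMk (hasDerivAt_const x y))).deriv

lemma pdy_eq_of_hasFDerivAt {L : ℝ × ℝ →L[ℝ] ℝ} (h : HasFDerivAt (uncurry G) L (x, y)) :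
    pdy G x y = L (0, 1) :=
  (h.comp_hasDerivAt (f := fun t => (x, t)) y
    ((hasDerivAt_const y x).prodMk (hasDerivAt_id' y))).deriv

lemma fderiv_uncurry_eq_zero (hG : DifferentiableAt ℝ (uncurry G) (x, y))
    (hx : pdx G x y = 0) (hy : pdy G x y = 0) : fderiv ℝ (uncurry G) (x, y) = 0 := by
  refine ContinuousLinearMap.prod_ext (ContinuousLinearMap.ext_ring ?_)
    (ContinuousLinearMap.ext_ring ?_)
  · simpa [← pdx_eq_of_hasFDerivAt hG.hasFDerivAt] using hx
  · simpa [← pdy_eq_of_hasFDerivAt hG.hasFDerivAt] using hy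

lemma hasFDerivAt_uncurry_pdx (hG : ContDiffAt ℝ 2 (uncurry G) (x, y)) :
    HasFDerivAt (uncurry (pdx G)) ((fderiv ℝ (fderiv ℝ (uncurry G)) (x, y)).flip (1, 0))
      (x, y) :=
  (hG.hasFDerivAt_fderiv_apply (1, 0)).congr_of_eventuallyEq <| (hG.eventually (by simp)).mono
    fun _ hq => pdx_eq_of_hasFDerivAt (hq.differentiableAt (by norm_num)).hasFDerivAt

lemma hasFDerivAt_uncurry_pdy (hG : ContDiffAt ℝ 2 (uncurry G) (x, y)) :
    HasFDerivAt (uncurry (pdy G)) ((fderiv ℝ (fderiv ℝ (uncurry G)) (x, y)).flip (0, 1))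
      (x, y) :=
  (hG.hasFDerivAt_fderiv_apply (0, 1)).congr_of_eventuallyEq <| (hG.eventually (by simp)).mono
    fun _ hq => pdy_eq_of_hasFDerivAt (hq.differentiableAt (by norm_num)).hasFDerivAt

end PartialDerivatives

lemma ContinuousLinearMap.apply_apply_eq_coord (Q : ℝ × ℝ →L[ℝ] ℝ × ℝ →L[ℝ] ℝ) (p q : ℝ × ℝ) :
    Q p q = p.1 * q.1 * Q (1, 0) (1, 0) + p.1 * q.2 * Q (1, 0) (0, 1)
      + p.2 * q.1 * Q (0, 1) (1, 0) + p.2 * q.2 * Q (0, 1) (0, 1) := by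
  have hp : p = p.1 • ((1 : ℝ), (0 : ℝ)) + p.2 • ((0 : ℝ), (1 : ℝ)) := by simp
  have hq : q = q.1 • ((1 : ℝ), (0 : ℝ)) + q.2 • ((0 : ℝ), (1 : ℝ)) := by simp
  conv_lhs => rw [hp, hq]
  simp only [map_add, map_smul, add_apply, smul_apply, smul_eq_mul]
  ring

lemma exists_add_mul_add_mul_sq_ne_zero {a b c : ℝ} (h : a * c - b ^ 2 ≠ 0) :
    ∃ s : ℝ, a + 2 * b * s + c * s ^ 2 ≠ 0 := by
  by_contra! H
  have ha := H 0
  have h1 := H 1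
  have h2 := H (-1)
  norm_num at ha h1 h2
  have hb : b = 0 := by linarith
  have hc : c = 0 := by linarith
  simp [ha, hb, hc] at h

theorem ContDiffAt.exists_open_bijOn_inverse {𝕂 : Type*} [RCLike 𝕂] {E F : Type*}
    [NormedAddCommGroup E] [NormedSpace 𝕂 E] [CompleteSpace E] [NormedAddCommGroup F]
    [NormedSpace 𝕂 F] {f : E → F} {f' : E ≃L[𝕂] F} {a : E} {n : ℕ} (hf : ContDiffAt 𝕂 n f a)
    (hf' : HasFDerivAt f (f' : E →L[𝕂] F) a) (hn : n ≠ 0) {s : Set E} (hs : s ∈ 𝓝 a) :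
    ∃ U ⊆ s, ∃ V : Set F, ∃ g : F → E, IsOpen U ∧ IsOpen V ∧ a ∈ U ∧ BijOn f U V ∧
      ContDiffOn 𝕂 n f U ∧ ContDiffOn 𝕂 n g V ∧ (∀ p ∈ U, g (f p) = p) ∧ ∀ q ∈ V, f (g q) = q := by
  have hn' : (n : WithTop ℕ∞) ≠ 0 := by exact_mod_cast hn
  set P := hf.toOpenPartialHomeomorph f hf' hn'
  obtain ⟨u, hu, hfu⟩ := hf.contDiffOn le_rfl (by simp)
  obtain ⟨T, hT, hgT⟩ := (hf.to_localInverse hf' hn').contDiffOn le_rfl (by simp)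
  set U := interior (s ∩ u ∩ P.source ∩ f ⁻¹' T)
  have haU : a ∈ U := mem_interior_iff_mem_nhds.mpr <| inter_mem
    (inter_mem (inter_mem hs hu)
      (P.open_source.mem_nhds (hf.mem_toOpenPartialHomeomorph_source hf' hn')))
    (hf.continuousAt.preimage_mem_nhds hT)
  have hUsub : U ⊆ s ∩ u ∩ P.source ∩ f ⁻¹' T := interior_subset
  have hUsrc : U ⊆ P.source := fun p hp => (hUsub hp).1.2
  refine ⟨U, fun p hp => (hUsub hp).1.1.1, P '' U, P.symm, isOpen_interior,
    P.isOpen_image_of_subset_source isOpen_interior hUsrc, haU, (P.injOn.mono hUsrc).bijOn_image,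
    hfu.mono fun p hp => (hUsub hp).1.1.2, hgT.mono ?_, fun p hp => P.left_inv (hUsrc hp), ?_⟩
  · rintro _ ⟨p, hp, rfl⟩
    simpa [P, P.left_inv (hUsrc hp)] using (hUsub hp).2
  · rintro _ ⟨p, hp, rfl⟩
    exact P.right_inv (P.map_source (hUsrc hp))

def HasMorseChart (F : ℝ × ℝ → ℝ) : Prop :=
  ∃ U V : Set (ℝ × ℝ), IsOpen U ∧ IsOpen V ∧ (0, 0) ∈ U ∧ (0, 0) ∈ V ∧
    ∃ Φ Ψ : ℝ × ℝ → ℝ × ℝ,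
      Φ (0, 0) = (0, 0) ∧
      Set.BijOn Φ U V ∧
      ContDiffOn ℝ 1 Φ U ∧
      ContDiffOn ℝ 1 Ψ V ∧
      (∀ p ∈ U, Ψ (Φ p) = p) ∧
      (∀ q ∈ V, Φ (Ψ q) = q) ∧
      ∃ ε₁ ε₂ : ℝ, (ε₁ = 1 ∨ ε₁ = -1) ∧ (ε₂ = 1 ∨ ε₂ = -1) ∧
        ∀ p ∈ U, F p = ε₁ * (Φ p).1 ^ 2 + ε₂ * (Φ p).2 ^ 2

theorem hasMorseChart_of_eventually_eq_sq_add_sq {F : ℝ × ℝ → ℝ} {Φ : ℝ × ℝ → ℝ × ℝ}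
    {Φ' : ℝ × ℝ →L[ℝ] ℝ × ℝ} (hΦ : ContDiffAt ℝ 1 Φ 0) (hΦ' : HasFDerivAt Φ Φ' 0)
    (hinj : Injective Φ') (hΦ0 : Φ 0 = 0) {ε₁ ε₂ : ℝ} (hε₁ : ε₁ = 1 ∨ ε₁ = -1)
    (hε₂ : ε₂ = 1 ∨ ε₂ = -1)
    (hF : ∀ᶠ p in 𝓝 0, F p = ε₁ * (Φ p).1 ^ 2 + ε₂ * (Φ p).2 ^ 2) : HasMorseChart F := by
  set e := (LinearEquiv.ofInjectiveEndo Φ'.toLinearMap hinj).toContinuousLinearEquiv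
  obtain ⟨U, hUF, V, Ψ, hU, hV, h0U, hbij, hΦU, hΨV, hleft, hright⟩ :=
    hΦ.exists_open_bijOn_inverse (f' := e) hΦ' one_ne_zero hF
  exact ⟨U, V, hU, hV, h0U, show (0 : ℝ × ℝ) ∈ V from hΦ0 ▸ hbij.mapsTo h0U, Φ, Ψ, hΦ0, hbij,
    hΦU, hΨV, hleft, hright, ε₁, ε₂, hε₁, hε₂, hUF⟩

theorem HasMorseChart.of_comp {F : ℝ × ℝ → ℝ} (L : (ℝ × ℝ) ≃L[ℝ] ℝ × ℝ)
    (h : HasMorseChart (F ∘ L)) : HasMorseChart F := by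
  obtain ⟨U, V, hUo, hVo, hU0, hV0, Φ, Ψ, hΦ0, hbij, hΦc, hΨc, hleft, hright,
    ε₁, ε₂, hε₁, hε₂, hF⟩ := h
  exact ⟨L.symm ⁻¹' U, V, hUo.preimage L.symm.continuous, hVo,
    by simpa [Prod.mk_zero_zero] using hU0, hV0, Φ ∘ L.symm, L ∘ Ψ,
    by simpa [Prod.mk_zero_zero] using hΦ0, hbij.comp L.symm.bijective.bijOn_preimage,
    hΦc.comp L.symm.contDiff.contDiffOn (mapsTo_preimage _ _),
    L.contDiff.contDiffOn.comp hΨc (mapsTo_univ _ _),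
    fun p hp => by simp [hleft _ hp], fun q hq => by simp [hright _ hq],
    ε₁, ε₂, hε₁, hε₂, fun p hp => by simpa using hF _ hp⟩

lemma exists_sign_mul_pos {a : ℝ} (ha : a ≠ 0) : ∃ ε : ℝ, (ε = 1 ∨ ε = -1) ∧ 0 < ε * a := by
  rcases ha.lt_or_gt with h | h
  · exact ⟨-1, Or.inr rfl, by linarith⟩
  · exact ⟨1, Or.inl rfl, by linarith⟩

lemma DifferentiableAt.hasFDerivAt_mul_of_eq_zero {E : Type*} [NormedAddCommGroup E]
    [NormedSpace ℝ E] {f u : E → ℝ} {u' : E →L[ℝ] ℝ} {x : E} (hf : DifferentiableAt ℝ f x)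
    (hu : HasFDerivAt u u' x) (hux : u x = 0) :
    HasFDerivAt (fun p => f p * u p) (f x • u') x := by
  have h := hf.hasFDerivAt.mul hu
  rwa [hux, zero_smul, add_zero] at h

open ContinuousLinearMap in
theorem hasMorseChart_of_eventually_eq_quadratic {F A B C : ℝ × ℝ → ℝ}
    (hA : ContDiffAt ℝ 1 A 0) (hB : ContDiffAt ℝ 1 B 0) (hC : ContDiffAt ℝ 1 C 0)
    (hA0 : A 0 ≠ 0) (hdet : A 0 * C 0 - B 0 ^ 2 ≠ 0)
    (hF : ∀ᶠ p in 𝓝 0, F p = A p * p.1 ^ 2 + 2 * B p * p.1 * p.2 + C p * p.2 ^ 2) :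
    HasMorseChart F := by
  set D : ℝ × ℝ → ℝ := fun p => (A p * C p - B p ^ 2) / A p
  have hD : ContDiffAt ℝ 1 D 0 := ((hA.mul hC).sub (hB.pow 2)).div hA hA0
  obtain ⟨α, hα, hαA⟩ := exists_sign_mul_pos hA0
  obtain ⟨β, hβ, hβD⟩ := exists_sign_mul_pos (show D 0 ≠ 0 from div_ne_zero hdet hA0)
  have hαA' : ContDiffAt ℝ 1 (fun p => α * A p) 0 := contDiffAt_const.mul hA
  have hβD' : ContDiffAt ℝ 1 (fun p => β * D p) 0 := contDiffAt_const.mul hD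
  have hf : ContDiffAt ℝ 1 (fun p => √(α * A p)) 0 := hαA'.sqrt hαA.ne'
  have hg : ContDiffAt ℝ 1 (fun p => √(β * D p)) 0 := hβD'.sqrt hβD.ne'
  have hk : ContDiffAt ℝ 1 (fun p => B p / A p) 0 := hB.div hA hA0
  set Φ : ℝ × ℝ → ℝ × ℝ := fun p => (√(α * A p) * (p.1 + B p / A p * p.2), √(β * D p) * p.2)
  have hΦ : ContDiffAt ℝ 1 Φ 0 :=
    (hf.mul (contDiffAt_fst.add (hk.mul contDiffAt_snd))).prodMk (hg.mul contDiffAt_snd)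
  have hu : HasFDerivAt (fun p : ℝ × ℝ => p.1 + B p / A p * p.2)
      (fst ℝ ℝ ℝ + (B 0 / A 0) • snd ℝ ℝ ℝ) 0 :=
    hasFDerivAt_fst.add ((hk.differentiableAt one_ne_zero).hasFDerivAt_mul_of_eq_zero
      hasFDerivAt_snd rfl)
  have hΦ' := ((hf.differentiableAt one_ne_zero).hasFDerivAt_mul_of_eq_zero hu (by simp)).prodMk
    ((hg.differentiableAt one_ne_zero).hasFDerivAt_mul_of_eq_zero hasFDerivAt_snd rfl)
  refine hasMorseChart_of_eventually_eq_sq_add_sq hΦ hΦ' ?_ (by simp [Φ]) hα hβ ?_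
  · rw [injective_iff_map_eq_zero]
    intro v hv
    simp only [Prod.ext_iff, ContinuousLinearMap.prod_apply, add_apply, smul_apply, coe_fst',
      coe_snd', smul_eq_mul, Prod.fst_zero, Prod.snd_zero, mul_eq_zero] at hv
    have hv2 : v.2 = 0 := hv.2.resolve_left (Real.sqrt_pos.mpr hβD).ne'
    have hv1 : v.1 = 0 := by simpa [hv2, (Real.sqrt_pos.mpr hαA).ne'] using hv.1
    exact Prod.ext hv1 hv2
  · filter_upwards [hF, hαA'.continuousAt.eventually (lt_mem_nhds hαA),
      hβD'.continuousAt.eventually (lt_mem_nhds hβD)] with p hp hAp hDp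
    have hAp0 : A p ≠ 0 := by rintro h; simp [h] at hAp
    rw [hp, mul_pow, mul_pow, Real.sq_sqrt hAp.le, Real.sq_sqrt hDp.le]
    simp only [D]
    rcases hα with rfl | rfl <;> rcases hβ with rfl | rfl <;> field_simp <;> ring

theorem hasMorseChart_of_eventually_eq_bilinear {F : ℝ × ℝ → ℝ}
    {Q : ℝ × ℝ → ℝ × ℝ →L[ℝ] ℝ × ℝ →L[ℝ] ℝ} (hQ : ContDiffAt ℝ 1 Q 0)
    (hF : ∀ᶠ p in 𝓝 0, F p = Q p p p) (hsymm : Q 0 (1, 0) (0, 1) = Q 0 (0, 1) (1, 0))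
    (hdet : Q 0 (1, 0) (1, 0) * Q 0 (0, 1) (0, 1) - Q 0 (1, 0) (0, 1) ^ 2 ≠ 0) :
    HasMorseChart F := by
  obtain ⟨s, hs⟩ := exists_add_mul_add_mul_sq_ne_zero hdet
  set L : (ℝ × ℝ) ≃L[ℝ] ℝ × ℝ := (ContinuousLinearEquiv.refl ℝ ℝ).skewProd
    (ContinuousLinearEquiv.refl ℝ ℝ) (s • ContinuousLinearMap.id ℝ ℝ)
  -- in the coordinates `L`, the coefficient of `x²` is `Q (1, s) (1, s)`, nonzero at `0`
  have hL : ∀ p, L p = (p.1, p.2 + s * p.1) := fun p => rfl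
  have hQL : ContDiffAt ℝ 1 (fun p => Q (L p)) 0 :=
    (show ContDiffAt ℝ 1 Q (L 0) by rwa [map_zero]).comp 0 L.contDiff.contDiffAt
  have hcoeff : ∀ u v : ℝ × ℝ, ContDiffAt ℝ 1 (fun p => Q (L p) u v) 0 := fun u v =>
    (hQL.clm_apply contDiffAt_const).clm_apply contDiffAt_const
  refine HasMorseChart.of_comp L (hasMorseChart_of_eventually_eq_quadratic
    (A := fun p => Q (L p) (1, s) (1, s))
    (B := fun p => (Q (L p) (1, s) (0, 1) + Q (L p) (0, 1) (1, s)) / 2)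
    (C := fun p => Q (L p) (0, 1) (0, 1)) (hcoeff _ _)
    (((hcoeff _ _).add (hcoeff _ _)).div_const 2) (hcoeff _ _) ?_ ?_ ?_)
  · convert hs using 1
    simp only [map_zero]
    rw [(Q 0).apply_apply_eq_coord (1, s) (1, s), hsymm]
    ring
  · convert hdet using 1
    simp only [map_zero]
    rw [(Q 0).apply_apply_eq_coord (1, s) (1, s), (Q 0).apply_apply_eq_coord (1, s) (0, 1),
      (Q 0).apply_apply_eq_coord (0, 1) (1, s), hsymm]
    ring
  · filter_upwards [(L.continuous.tendsto' 0 0 (map_zero L)).eventually hF] with p hp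
    rw [comp_apply, hp, (Q (L p)).apply_apply_eq_coord (L p) (L p),
      (Q (L p)).apply_apply_eq_coord (1, s) (1, s), (Q (L p)).apply_apply_eq_coord (1, s) (0, 1),
      (Q (L p)).apply_apply_eq_coord (0, 1) (1, s), hL]
    ring

theorem hasMorseChart_of_contDiffAt {F : ℝ × ℝ → ℝ} (hF : ContDiffAt ℝ 3 F 0) (hF0 : F 0 = 0)
    (hdF : fderiv ℝ F 0 = 0)
    (hdet : fderiv ℝ (fderiv ℝ F) 0 (1, 0) (1, 0) * fderiv ℝ (fderiv ℝ F) 0 (0, 1) (0, 1)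
      - fderiv ℝ (fderiv ℝ F) 0 (0, 1) (1, 0) ^ 2 ≠ 0) :
    HasMorseChart F := by
  obtain ⟨r, hr, hFr⟩ : ∃ r > 0, ContDiffOn ℝ 3 F (ball 0 r) := by
    obtain ⟨u, hu, hFu⟩ := hF.contDiffOn le_rfl (by simp)
    obtain ⟨r, hr, hru⟩ := Metric.mem_nhds_iff.mp hu
    exact ⟨r, hr, hFu.mono hru⟩
  set H := fderiv ℝ (fderiv ℝ F) 0
  have hHsymm : H (0, 1) (1, 0) = H (1, 0) (0, 1) := hF.isSymmSndFDerivAt (by norm_num) _ _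
  have hHr : ContDiffOn ℝ 1 (fderiv ℝ (fderiv ℝ F)) (ball 0 r) :=
    (hFr.fderiv_of_isOpen (m := 2) isOpen_ball (by norm_num)).fderiv_of_isOpen isOpen_ball
      (by norm_num)
  have hQ0 : ∫ t in (0 : ℝ)..1, (1 - t) • fderiv ℝ (fderiv ℝ F) (t • (0 : ℝ × ℝ))
      = (1 / 2 : ℝ) • H := by
    simp only [smul_zero]
    exact integral_one_sub_smul_const H
  refine hasMorseChart_of_eventually_eq_bilinear
    (Q := fun p => ∫ t in (0 : ℝ)..1, (1 - t) • fderiv ℝ (fderiv ℝ F) (t • p))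
    ((contDiffOn_integral_smul_comp_smul (by fun_prop) hHr).contDiffAt (ball_mem_nhds 0 hr))
    ?_ ?_ ?_
  · filter_upwards [ball_mem_nhds 0 hr] with p hp
    exact eq_integral_fderiv_fderiv_apply_apply (hFr.of_le (by norm_num)) hF0 hdF hp
  · simp only [hQ0, smul_apply, hHsymm]
  · simp only [hQ0, smul_apply, smul_eq_mul]
    intro h
    apply hdet
    rw [hHsymm]
    linear_combination 4 * h

/-- Simplified Morse lemma: if `G` is three-times continuously differentiable near the
origin, vanishes to first order there, and has nondegenerate Hessian, then after a
continuously differentiable change of coordinates `(x, y) ↦ (u, v)` fixing the origin,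
`G` takes the form `±u² ± v²`. -/
theorem morse_lemma
    (G : ℝ → ℝ → ℝ)
    (hG : ContDiffAt ℝ 3 (fun p : ℝ × ℝ => G p.1 p.2) (0, 0))
    (h0 : G 0 0 = 0)
    (hGx : pdx G 0 0 = 0)
    (hGy : pdy G 0 0 = 0)
    (hHess : pdx (pdx G) 0 0 * pdy (pdy G) 0 0 - (pdy (pdx G) 0 0) ^ 2 ≠ 0) :
    ∃ U V : Set (ℝ × ℝ), IsOpen U ∧ IsOpen V ∧ (0, 0) ∈ U ∧ (0, 0) ∈ V ∧
      ∃ Φ Ψ : ℝ × ℝ → ℝ × ℝ,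
        Φ (0, 0) = (0, 0) ∧
        Set.BijOn Φ U V ∧
        ContDiffOn ℝ 1 Φ U ∧
        ContDiffOn ℝ 1 Ψ V ∧
        (∀ p ∈ U, Ψ (Φ p) = p) ∧
        (∀ q ∈ V, Φ (Ψ q) = q) ∧
        ∃ ε₁ ε₂ : ℝ, (ε₁ = 1 ∨ ε₁ = -1) ∧ (ε₂ = 1 ∨ ε₂ = -1) ∧
          ∀ p ∈ U, G p.1 p.2 = ε₁ * (Φ p).1 ^ 2 + ε₂ * (Φ p).2 ^ 2 := by
  change ContDiffAt ℝ 3 (uncurry G) 0 at hG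
  have hG2 : ContDiffAt ℝ 2 (uncurry G) (0, 0) := hG.of_le (by norm_num)
  rw [pdx_eq_of_hasFDerivAt (hasFDerivAt_uncurry_pdx hG2),
    pdy_eq_of_hasFDerivAt (hasFDerivAt_uncurry_pdx hG2),
    pdy_eq_of_hasFDerivAt (hasFDerivAt_uncurry_pdy hG2)] at hHess
  simp only [ContinuousLinearMap.flip_apply, Prod.mk_zero_zero] at hHess
  exact hasMorseChart_of_contDiffAt hG h0
    (fderiv_uncurry_eq_zero (hG2.differentiableAt (by norm_num)) hGx hGy) hHess
end

section
/- Let g : ℝ → ℝ be three-times continuously differentiable near 0 with g(0) = 0, g'(0) = 0, and g''(0) ≠ 0, and let σ = sgn(g''(0)). Then there exist δ > 0 and a continuously differentiable function U : (-δ, δ) → ℝ with U(0) = 0 and U'(0) ≠ 0 such that U is injective on (-δ, δ), its inverse is continuously differentiable, and σ·g(x) = U(x)² for all |x| < δ. -/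
/-!
Taylor's formula with integral remainder writes `g x = x ^ 2 * h x` with
`h x = ∫ t in 0..1, (1 - t) * g'' (t * x)`; differentiating under the integral sign shows that `h`
is `C¹` because `g` is `C³`, and `h 0 = g'' 0 / 2`. Hence `σ * h > 0` near `0`, so
`U x = x * √(σ * h x)` is `C¹` with `U' 0 = √(σ * h 0) ≠ 0`, and the inverse function theorem makes
`U` a `C¹` diffeomorphism near `0`. To integrate along whole segments, `g` is first replaced by a
globally `C³` function agreeing with it near `0` (a bump-function cutoff).
-/

open Set Filter Topology Metric

variable {E : Type*} [NormedAddCommGroup E] [NormedSpace ℝ E]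

section ParametricIntegral

variable {φ : ℝ → ℝ} {F : ℝ → E}

theorem hasDerivAt_integral_smul_comp_mul (hφ : Continuous φ) (hF : ContDiff ℝ 1 F) (x₀ : ℝ) :
    HasDerivAt (fun x => ∫ t in (0:ℝ)..1, φ t • F (t * x))
      (∫ t in (0:ℝ)..1, (φ t * t) • deriv F (t * x₀)) x₀ := by
  have hF' : Continuous (deriv F) := hF.continuous_deriv le_rfl
  have hdiff : Differentiable ℝ F := hF.differentiable one_ne_zero
  obtain ⟨M, hM⟩ := (isCompact_Icc (a := (0:ℝ)) (b := 1)).prod (isCompact_closedBall x₀ 1)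
    |>.exists_bound_of_continuousOn (f := fun p : ℝ × ℝ => (φ p.1 * p.1) • deriv F (p.1 * p.2))
      (by fun_prop)
  refine (intervalIntegral.hasDerivAt_integral_of_dominated_loc_of_deriv_le
    (μ := MeasureTheory.volume) (F := fun x t => φ t • F (t * x))
    (F' := fun x t => (φ t * t) • deriv F (t * x)) (bound := fun _ => M)
    (ball_mem_nhds x₀ one_pos) ?_ ?_ ?_ ?_ intervalIntegrable_const ?_).2
  · exact .of_forall fun x => (by fun_prop : Continuous fun t => φ t • F (t * x)).aestronglyMeasurable
  · exact (by fun_prop : Continuous fun t => φ t • F (t * x₀)).intervalIntegrable _ _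
  · exact (by fun_prop : Continuous fun t => (φ t * t) • deriv F (t * x₀)).aestronglyMeasurable
  · refine .of_forall fun t ht x hx => hM (t, x) ⟨?_, ball_subset_closedBall hx⟩
    rw [uIoc_of_le zero_le_one] at ht
    exact Ioc_subset_Icc_self ht
  · refine .of_forall fun t _ x _ => ?_
    have := ((hdiff (t * x)).hasDerivAt.scomp x ((hasDerivAt_id' x).const_mul t)).const_smul (φ t)
    simpa [Function.comp_def, smul_smul, Pi.smul_def] using this

theorem contDiff_integral_smul_comp_mul {n : ℕ} (hφ : Continuous φ) (hF : ContDiff ℝ n F) :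
    ContDiff ℝ n fun x => ∫ t in (0:ℝ)..1, φ t • F (t * x) := by
  induction n generalizing φ F with
  | zero =>
    rw [Nat.cast_zero, contDiff_zero] at hF ⊢
    exact intervalIntegral.continuous_parametric_intervalIntegral_of_continuous' (by fun_prop) _ _
  | succ n ih =>
    have hF1 : ContDiff ℝ 1 F := hF.of_le (by exact_mod_cast Nat.le_add_left 1 n)
    have hderiv := hasDerivAt_integral_smul_comp_mul hφ hF1
    rw [Nat.cast_add, Nat.cast_one, contDiff_succ_iff_deriv] at hF ⊢
    refine ⟨fun x => (hderiv x).differentiableAt, by simp, ?_⟩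
    rw [funext fun x => (hderiv x).deriv]
    exact ih (by fun_prop) hF.2.2

end ParametricIntegral

section Taylor

variable [CompleteSpace E]

theorem eq_add_smul_add_sq_smul_integral {g : ℝ → E} (hg : ContDiff ℝ 2 g) (x : ℝ) :
    g x = g 0 + x • deriv g 0 + x ^ 2 • ∫ t in (0:ℝ)..1, (1 - t) • deriv (deriv g) (t * x) := by
  have := map_add_eq_sum_add_integral_iteratedFDeriv (n := 1) (x := 0) (y := x)
    fun t _ => hg.contDiffAt
  simp only [zero_add, iteratedFDeriv_apply_eq_iteratedDeriv_mul_prod, Finset.prod_const,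
    Finset.card_univ, Fintype.card_fin, smul_eq_mul, Finset.sum_range_succ, Finset.range_one,
    Finset.sum_singleton, Nat.factorial, iteratedDeriv_zero, iteratedDeriv_succ, pow_one, pow_zero,
    one_smul, Nat.cast_one, inv_one, Nat.reduceAdd, Nat.mul_one] at this
  rw [this, ← intervalIntegral.integral_smul]
  simp only [smul_comm (x ^ 2)]

theorem exists_contDiff_eq_sq_smul {n : ℕ} {g : ℝ → E} (hg : ContDiff ℝ (n + 2) g) (h0 : g 0 = 0)
    (h1 : deriv g 0 = 0) :
    ∃ h : ℝ → E, ContDiff ℝ n h ∧ h 0 = (2 : ℝ)⁻¹ • deriv (deriv g) 0 ∧ ∀ x, g x = x ^ 2 • h x := by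
  refine ⟨fun x => ∫ t in (0:ℝ)..1, (1 - t) • deriv (deriv g) (t * x),
    contDiff_integral_smul_comp_mul (by fun_prop) (hg.iterate_deriv' n 2), ?_,
    fun x => by simpa [h0, h1] using eq_add_smul_add_sq_smul_integral (hg.of_le (by simp)) x⟩
  simp only [mul_zero]
  rw [intervalIntegral.integral_smul_const, intervalIntegral.integral_sub intervalIntegrable_const
    intervalIntegral.intervalIntegrable_id, integral_id]
  norm_num

end Taylor

section LocalExtension

variable {F : Type*} [NormedAddCommGroup F] [NormedSpace ℝ F] [HasContDiffBump E]

theorem ContDiffAt.exists_contDiff_eventuallyEq {n : ℕ} {f : E → F} {a : E}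
    (hf : ContDiffAt ℝ n f a) : ∃ f' : E → F, ContDiff ℝ n f' ∧ f' =ᶠ[𝓝 a] f := by
  obtain ⟨u, hu, hfu⟩ := hf.contDiffOn le_rfl (by simp)
  obtain ⟨r, hr, hru⟩ := Metric.mem_nhds_iff.1 hu
  let φ : ContDiffBump a := ⟨r / 4, r / 2, by positivity, by linarith⟩
  refine ⟨fun x => φ x • f x, contDiff_iff_contDiffAt.2 fun x => ?_, ?_⟩
  · by_cases hx : x ∈ ball a r
    · exact φ.contDiff.contDiffAt.smul ((hfu.mono hru).contDiffAt (isOpen_ball.mem_nhds hx))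
    · have hφx : φ =ᶠ[𝓝 x] 0 := by
        refine notMem_tsupport_iff_eventuallyEq.1 fun hx' => hx ?_
        rw [φ.tsupport_eq] at hx'
        exact closedBall_subset_ball (by change r / 2 < r; linarith) hx'
      refine (contDiffAt_const (c := (0 : F))).congr_of_eventuallyEq ?_
      filter_upwards [hφx] with y hy
      simp [hy]
  · filter_upwards [closedBall_mem_nhds a (by positivity : 0 < r / 4)] with x hx
    simp [φ.one_of_mem_closedBall hx]

end LocalExtension

theorem ContDiffAt.exists_ball_subset_injOn_leftInvOn {f : ℝ → ℝ} {a : ℝ} {s : Set ℝ}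
    (hf : ContDiffAt ℝ 1 f a) (hf' : deriv f a ≠ 0) (hs : s ∈ 𝓝 a) :
    ∃ δ > 0, ball a δ ⊆ s ∧ ContDiffOn ℝ 1 f (ball a δ) ∧ InjOn f (ball a δ) ∧
      ∃ g : ℝ → ℝ, ContDiffOn ℝ 1 g (f '' ball a δ) ∧ LeftInvOn g f (ball a δ) := by
  have hfa : HasDerivAt f (deriv f a) a := (hf.differentiableAt one_ne_zero).hasDerivAt
  let e := hf.toOpenPartialHomeomorph f (hfa.hasFDerivAt_equiv hf') one_ne_zero
  have hderiv : ContinuousAt (deriv f) a :=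
    (hf.fderiv_right (m := 0) le_rfl).continuousAt.clm_apply continuousAt_const
  have hgood : ∀ᶠ x in 𝓝 a, x ∈ s ∧ x ∈ e.source ∧ ContDiffAt ℝ 1 f x ∧ deriv f x ≠ 0 :=
    (eventually_mem_set.2 hs).and <| (eventually_mem_set.2 <| e.open_source.mem_nhds
      (hf.mem_toOpenPartialHomeomorph_source _ _)).and <|
      (hf.eventually (by simp)).and (hderiv.eventually_ne hf')
  obtain ⟨δ, hδ, hball⟩ := Metric.eventually_nhds_iff_ball.1 hgood
  refine ⟨δ, hδ, fun x hx => (hball x hx).1, fun x hx => (hball x hx).2.2.1.contDiffWithinAt,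
    e.injOn.mono fun x hx => (hball x hx).2.1, e.symm, ?_, fun x hx => e.left_inv (hball x hx).2.1⟩
  rintro _ ⟨x, hx, rfl⟩
  obtain ⟨-, hxe, hfx, hf'x⟩ := hball x hx
  have hex : e.symm (e x) = x := e.left_inv hxe
  refine (e.contDiffAt_symm_deriv hf'x (e.map_source hxe) ?_ ?_).contDiffWithinAt
  · rw [hex]; exact (hfx.differentiableAt one_ne_zero).hasDerivAt
  · rwa [hex]

/-- One-dimensional Morse-type lemma: if `g` is three-times continuously differentiable
near `0` with `g(0) = g'(0) = 0` and `g''(0) ≠ 0`, and `σ = sgn(g''(0))`, then there is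
a continuously differentiable change of coordinate `U` near `0` (injective, with
continuously differentiable inverse, `U(0) = 0`, `U'(0) ≠ 0`) such that
`σ·g(x) = U(x)²` near `0`. -/
theorem one_dim_morse_lemma
    (g : ℝ → ℝ)
    (hg : ContDiffAt ℝ 3 g 0)
    (h0 : g 0 = 0)
    (h1 : deriv g 0 = 0)
    (h2 : deriv (deriv g) 0 ≠ 0) :
    ∃ δ > 0, ∃ U : ℝ → ℝ,
      U 0 = 0 ∧
      deriv U 0 ≠ 0 ∧
      ContDiffOn ℝ 1 U (Set.Ioo (-δ) δ) ∧
      Set.InjOn U (Set.Ioo (-δ) δ) ∧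
      (∃ W : ℝ → ℝ, ContDiffOn ℝ 1 W (U '' Set.Ioo (-δ) δ) ∧
        ∀ x ∈ Set.Ioo (-δ) δ, W (U x) = x) ∧
      ∀ x : ℝ, |x| < δ → Real.sign (deriv (deriv g) 0) * g x = (U x) ^ 2 := by
  set σ := Real.sign (deriv (deriv g) 0)
  obtain ⟨G, hG, hGg⟩ := ContDiffAt.exists_contDiff_eventuallyEq (n := 3) hg
  obtain ⟨h, hh, hh0, hGh⟩ := exists_contDiff_eq_sq_smul (n := 1) hG (hGg.eq_of_nhds.trans h0)
    (hGg.deriv_eq.trans h1)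
  rw [hGg.deriv.deriv_eq, smul_eq_mul] at hh0
  have hc0 : 0 < σ * h 0 := by
    rw [hh0]; nlinarith [Real.sign_mul_pos_of_ne_zero _ h2]
  have hc : ContDiffAt ℝ 1 (fun x => σ * h x) 0 := (contDiff_const.mul hh).contDiffAt
  set U := fun x => x * √(σ * h x)
  have hsqrt := (Real.contDiffAt_sqrt hc0.ne').comp 0 hc
  have hU : ContDiffAt ℝ 1 U 0 := contDiffAt_id.mul hsqrt
  have hU' : deriv U 0 = √(σ * h 0) :=
    ((hasDerivAt_id' 0).mul (hsqrt.differentiableAt one_ne_zero).hasDerivAt).deriv.trans (by simp)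
  have hs : ∀ᶠ x in 𝓝 0, g x = G x ∧ 0 < σ * h x :=
    hGg.symm.and (hc.continuousAt.eventually (lt_mem_nhds hc0))
  obtain ⟨δ, hδ, hsub, hUC, hinj, W, hW, hWU⟩ :=
    hU.exists_ball_subset_injOn_leftInvOn (by rw [hU']; positivity) hs
  rw [Real.ball_eq_Ioo, zero_sub, zero_add] at hsub hUC hinj hW hWU
  refine ⟨δ, hδ, U, by simp [U], by rw [hU']; positivity, hUC, hinj, ⟨W, hW, hWU⟩, fun x hx => ?_⟩
  obtain ⟨hgx, hcx⟩ := hsub (abs_lt.1 hx)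
  rw [hgx, hGh, smul_eq_mul, mul_pow, Real.sq_sqrt hcx.le]
  ring
end

section
/- Let f : ℝ → ℝ be four-times continuously differentiable, fix [a₀, b₀] with a₀ < b₀, and let c₀ ∈ (a₀, b₀) be a mean value abscissa for f on [a₀, b₀]. Suppose f''(c₀) = 0, f'(b₀) = f'(c₀), f''(b₀) ≠ 0, f'''(c₀) ≠ 0, and that f''(b₀) and f'''(c₀) have opposite signs (i.e. f''(b₀)·f'''(c₀) < 0). Then (b₀, c₀) is an isolated solution of the mean value relation: there exist δ > 0 and ε > 0 such that the only pair (b, c) with |b - b₀| < δ, |c - c₀| < ε, and (f(b) - f(a₀))/(b - a₀) = f'(c) is (b, c) = (b₀, c₀). In particular, there is no continuous function C defined on a neighborhood of b₀ with C(b₀) = c₀ satisfying (f(b) - f(a₀))/(b - a₀) = f'(C(b)) for all b in that neighborhood. -/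
/-!
Put `L = f'(c₀) = f'(b₀)`. Since `f(b₀) - f(a₀) = L (b₀ - a₀)`, the mean value relation reads
`f b - f b₀ - L (b - b₀) = (b - a₀) (f' c - f' c₀)`. The left side is the gap between `f` and its
tangent line at `b₀`, which for `b ≠ b₀` near `b₀` has the strict sign of `f''(b₀)`. As
`f''(c₀) = 0`, the factor `f' c - f' c₀` is the gap between `f'` and its tangent line at `c₀`,
which for `c ≠ c₀` near `c₀` has the strict sign of `f'''(c₀)`. Opposite signs force `b = b₀`,
and then `f' c = f' c₀` forces `c = c₀`. A continuous selection `C` through `c₀` would keep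
`(b, C b)` in that neighbourhood for all `b` near `b₀`, hence force all those `b` to equal `b₀`.
-/

open Set Filter Topology SignType

theorem eventually_nhdsNE_lt_of_deriv_deriv_pos {f : ℝ → ℝ} {x₀ : ℝ}
    (hf : 0 < deriv (deriv f) x₀) (hd : deriv f x₀ = 0)
    (hdiff : ∀ᶠ x in 𝓝 x₀, DifferentiableAt ℝ f x) :
    ∀ᶠ x in 𝓝[≠] x₀, f x₀ < f x := by
  obtain ⟨ε, hε, hball⟩ := Metric.eventually_nhds_iff_ball.1
    (hdiff.and (eventually_nhdsWithin_sign_eq_of_deriv_pos hf hd))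
  have hcont : ContinuousOn f (Metric.ball x₀ ε) := fun x hx =>
    (hball x hx).1.continuousAt.continuousWithinAt
  have hIcc : ∀ x ∈ Metric.ball x₀ ε, Icc x x₀ ∪ Icc x₀ x ⊆ Metric.ball x₀ ε := fun x hx =>
    have hord := (convex_ball x₀ ε).ordConnected
    union_subset (hord.out hx (Metric.mem_ball_self hε)) (hord.out (Metric.mem_ball_self hε) hx)
  filter_upwards [nhdsWithin_le_nhds (Metric.ball_mem_nhds x₀ hε), self_mem_nhdsWithin]
    with x hx (hne : x ≠ x₀)
  rcases hne.lt_or_gt with hlt | hlt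
  · have hanti : StrictAntiOn f (Icc x x₀) := by
      refine strictAntiOn_of_deriv_neg (convex_Icc x x₀)
        (hcont.mono fun y hy => hIcc x hx (Or.inl hy)) fun y hy => ?_
      rw [interior_Icc] at hy
      rw [← sign_eq_neg_one_iff, (hball y (hIcc x hx (Or.inl (Ioo_subset_Icc_self hy)))).2,
        sign_eq_neg_one_iff, sub_neg]
      exact hy.2
    exact hanti (left_mem_Icc.2 hlt.le) (right_mem_Icc.2 hlt.le) hlt
  · have hmono : StrictMonoOn f (Icc x₀ x) := by
      refine strictMonoOn_of_deriv_pos (convex_Icc x₀ x)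
        (hcont.mono fun y hy => hIcc x hx (Or.inr hy)) fun y hy => ?_
      rw [interior_Icc] at hy
      rw [← sign_eq_one_iff, (hball y (hIcc x hx (Or.inr (Ioo_subset_Icc_self hy)))).2,
        sign_eq_one_iff, sub_pos]
      exact hy.1
    exact hmono (left_mem_Icc.2 hlt.le) (right_mem_Icc.2 hlt.le) hlt

theorem eventually_nhdsNE_deriv_deriv_mul_sub_tangent_pos {f : ℝ → ℝ} {x₀ : ℝ}
    (hf : deriv (deriv f) x₀ ≠ 0) (hdiff : ∀ᶠ x in 𝓝 x₀, DifferentiableAt ℝ f x) :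
    ∀ᶠ x in 𝓝[≠] x₀, 0 < deriv (deriv f) x₀ * (f x - f x₀ - deriv f x₀ * (x - x₀)) := by
  set K := deriv (deriv f) x₀
  -- The factor `K` makes `g'' x₀ = K ^ 2` positive whatever the sign of `K`.
  set g : ℝ → ℝ := fun x => K * (f x - deriv f x₀ * x)
  have hg' : deriv g =ᶠ[𝓝 x₀] fun x => K * (deriv f x - deriv f x₀) := by
    filter_upwards [hdiff] with x hx
    simpa only [mul_one] using
      ((hx.hasDerivAt.fun_sub ((hasDerivAt_id' x).const_mul (deriv f x₀))).const_mul K).deriv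
  have hgd : deriv g x₀ = 0 := by rw [hg'.eq_of_nhds, sub_self, mul_zero]
  have hgdd : 0 < deriv (deriv g) x₀ := by
    rw [hg'.deriv_eq, deriv_const_mul_field, deriv_sub_const]
    exact mul_self_pos.2 hf
  have hgdiff : ∀ᶠ x in 𝓝 x₀, DifferentiableAt ℝ g x := by
    filter_upwards [hdiff] with x hx
    exact (hx.sub ((differentiableAt_id).const_mul _)).const_mul K
  filter_upwards [eventually_nhdsNE_lt_of_deriv_deriv_pos hgdd hgd hgdiff] with x hx
  simp only [g] at hx
  linarith

theorem exists_isolated_secant_slope_eq {f g : ℝ → ℝ} {a₀ b₀ c₀ K M : ℝ} (hab : a₀ < b₀)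
    (hmv : (f b₀ - f a₀) / (b₀ - a₀) = g c₀)
    (hb : ∀ᶠ b in 𝓝[≠] b₀, 0 < K * (f b - f b₀ - g c₀ * (b - b₀)))
    (hc : ∀ᶠ c in 𝓝[≠] c₀, 0 < M * (g c - g c₀)) (hKM : K * M < 0) :
    ∃ δ > 0, ∃ ε > 0, ∀ b c : ℝ, |b - b₀| < δ → |c - c₀| < ε →
      (f b - f a₀) / (b - a₀) = g c → b = b₀ ∧ c = c₀ := by
  obtain ⟨δ, hδ, hδb⟩ := Metric.eventually_nhds_iff.1
    ((eventually_nhdsWithin_iff.1 hb).and (eventually_gt_nhds hab))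
  obtain ⟨ε, hε, hεc⟩ := Metric.eventually_nhds_iff.1 (eventually_nhdsWithin_iff.1 hc)
  refine ⟨δ, hδ, ε, hε, fun b c hbδ hcε heq => ?_⟩
  obtain ⟨hbK, hba⟩ := hδb (by rwa [Real.dist_eq])
  have hcM : c ≠ c₀ → 0 < M * (g c - g c₀) := hεc (by rwa [Real.dist_eq])
  have hgap : f b - f b₀ - g c₀ * (b - b₀) = (b - a₀) * (g c - g c₀) := by
    rw [div_eq_iff (sub_pos.2 hab).ne'] at hmv
    rw [div_eq_iff (sub_pos.2 hba).ne'] at heq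
    linear_combination heq - hmv
  by_cases hbb : b = b₀
  · subst hbb
    refine ⟨rfl, by_contra fun hcc => ?_⟩
    have hgc : g c - g c₀ = 0 := by
      have hprod : (b - a₀) * (g c - g c₀) = 0 := by rw [← hgap]; ring
      exact (mul_eq_zero.1 hprod).resolve_left (sub_pos.2 hab).ne'
    simpa [hgc] using hcM hcc
  · exfalso
    have hKu : 0 < K * (g c - g c₀) := by
      have := hbK hbb
      rw [hgap, mul_left_comm] at this
      exact pos_of_mul_pos_right this (sub_pos.2 hba).le
    have hMu : 0 < M * (g c - g c₀) := hcM fun hcc => by simp [hcc] at hKu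
    nlinarith [mul_pos hKu hMu, mul_nonpos_of_nonpos_of_nonneg hKM.le (sq_nonneg (g c - g c₀))]

theorem not_exists_continuousOn_of_isolated {R : ℝ → ℝ → Prop} {b₀ c₀ : ℝ}
    (hR : ∃ δ > 0, ∃ ε > 0, ∀ b c : ℝ, |b - b₀| < δ → |c - c₀| < ε → R b c → b = b₀ ∧ c = c₀) :
    ¬ ∃ δ > 0, ∃ C : ℝ → ℝ, ContinuousOn C (Ioo (b₀ - δ) (b₀ + δ)) ∧ C b₀ = c₀ ∧
        ∀ b : ℝ, |b - b₀| < δ → R b (C b) := by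
  rintro ⟨δ', hδ', C, hCcont, hC₀, hCR⟩
  obtain ⟨δ, hδ, ε, hε, hiso⟩ := hR
  have hCat : ContinuousAt C b₀ :=
    hCcont.continuousAt (Ioo_mem_nhds (by linarith) (by linarith))
  have hclose : ∀ r > 0, ∀ᶠ b in 𝓝 b₀, |b - b₀| < r := fun r hr =>
    Metric.eventually_nhds_iff.2 ⟨r, hr, fun b hb => by rwa [← Real.dist_eq]⟩
  have hCclose : ∀ᶠ b in 𝓝 b₀, |C b - c₀| < ε := by
    simpa only [hC₀, Real.dist_eq] using hCat.eventually (Metric.ball_mem_nhds (C b₀) hε)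
  have hnear := (hclose δ hδ).and ((hclose δ' hδ').and hCclose)
  have hb : ∀ᶠ b in 𝓝[≠] b₀, b = b₀ := by
    filter_upwards [nhdsWithin_le_nhds hnear] with b ⟨hbδ, hbδ', hCb⟩
    exact (hiso b (C b) hbδ hCb (hCR b hbδ')).1
  obtain ⟨b, hbb, hne⟩ := (hb.and self_mem_nhdsWithin).exists
  exact hne hbb

theorem mean_value_abscissa_isolated_of_opposite_signs_general
    (f : ℝ → ℝ) (hf : ContDiff ℝ 4 f)
    (a₀ b₀ c₀ : ℝ) (hab : a₀ < b₀)
    (hmv : (f b₀ - f a₀) / (b₀ - a₀) = deriv f c₀)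
    (h2c : iteratedDeriv 2 f c₀ = 0)
    (h1b : deriv f b₀ = deriv f c₀)
    (h2b : iteratedDeriv 2 f b₀ ≠ 0)
    (h3c : iteratedDeriv 3 f c₀ ≠ 0)
    (hsign : iteratedDeriv 2 f b₀ * iteratedDeriv 3 f c₀ < 0) :
    (∃ δ > 0, ∃ ε > 0, ∀ b c : ℝ, |b - b₀| < δ → |c - c₀| < ε →
      (f b - f a₀) / (b - a₀) = deriv f c → b = b₀ ∧ c = c₀) ∧
    ¬ ∃ δ > 0, ∃ C : ℝ → ℝ,
        ContinuousOn C (Set.Ioo (b₀ - δ) (b₀ + δ)) ∧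
        C b₀ = c₀ ∧
        ∀ b : ℝ, |b - b₀| < δ → (f b - f a₀) / (b - a₀) = deriv f (C b) := by
  simp only [iteratedDeriv_eq_iterate, Function.iterate_succ, Function.iterate_zero,
    Function.comp_apply, Function.id_comp] at h2c h2b h3c hsign
  have hdiff : Differentiable ℝ f := hf.differentiable (by norm_num)
  have hdiff' : Differentiable ℝ (deriv f) := by
    simpa only [iteratedDeriv_one] using hf.differentiable_iteratedDeriv 1 (by norm_num)
  have hb := eventually_nhdsNE_deriv_deriv_mul_sub_tangent_pos h2b (.of_forall hdiff)
  have hc := eventually_nhdsNE_deriv_deriv_mul_sub_tangent_pos h3c (.of_forall hdiff')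
  simp only [h1b, h2c, zero_mul, sub_zero] at hb hc
  have hiso := exists_isolated_secant_slope_eq hab hmv hb hc hsign
  exact ⟨hiso, not_exists_continuousOn_of_isolated hiso⟩

/-- Theorem (main II, opposite signs): if `f` is four-times continuously
differentiable, `c₀` is a mean value abscissa for `f` on `[a₀, b₀]` with
`f''(c₀) = 0`, `f'(b₀) = f'(c₀)`, `f''(b₀) ≠ 0`, `f'''(c₀) ≠ 0`, and `f''(b₀)` and
`f'''(c₀)` have opposite signs, then `(b₀, c₀)` is an isolated solution of the mean
value relation; in particular no continuous local choice `c = C(b)` through `c₀`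
exists. -/
theorem mean_value_abscissa_isolated_of_opposite_signs
    (f : ℝ → ℝ) (hf : ContDiff ℝ 4 f)
    (a₀ b₀ c₀ : ℝ) (hab : a₀ < b₀) (hc : c₀ ∈ Set.Ioo a₀ b₀)
    (hmv : (f b₀ - f a₀) / (b₀ - a₀) = deriv f c₀)
    (h2c : iteratedDeriv 2 f c₀ = 0)
    (h1b : deriv f b₀ = deriv f c₀)
    (h2b : iteratedDeriv 2 f b₀ ≠ 0)
    (h3c : iteratedDeriv 3 f c₀ ≠ 0)
    (hsign : iteratedDeriv 2 f b₀ * iteratedDeriv 3 f c₀ < 0) :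
    (∃ δ > 0, ∃ ε > 0, ∀ b c : ℝ, |b - b₀| < δ → |c - c₀| < ε →
      (f b - f a₀) / (b - a₀) = deriv f c → b = b₀ ∧ c = c₀) ∧
    ¬ ∃ δ > 0, ∃ C : ℝ → ℝ,
        ContinuousOn C (Set.Ioo (b₀ - δ) (b₀ + δ)) ∧
        C b₀ = c₀ ∧
        ∀ b : ℝ, |b - b₀| < δ → (f b - f a₀) / (b - a₀) = deriv f (C b) :=
  mean_value_abscissa_isolated_of_opposite_signs_general f hf a₀ b₀ c₀ hab hmv h2c h1b h2b h3c hsign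
end

section
/- Let f : ℝ → ℝ be four-times continuously differentiable, fix [a₀, b₀] with a₀ < b₀, and let c₀ ∈ (a₀, b₀) be a mean value abscissa for f on [a₀, b₀]. Suppose f''(c₀) = 0, f'(b₀) = f'(c₀), f''(b₀) ≠ 0, f'''(c₀) ≠ 0, and that f''(b₀) and f'''(c₀) have the same sign (i.e. f''(b₀)·f'''(c₀) > 0). Then there exist δ > 0, ε > 0 and two continuously differentiable functions C₁, C₂ : (b₀ - δ, b₀ + δ) → ℝ with C₁(b₀) = C₂(b₀) = c₀, satisfying (f(b) - f(a₀))/(b - a₀) = f'(Cᵢ(b)) for all |b - b₀| < δ and i = 1, 2, with C₁(b) ≠ C₂(b) for b ≠ b₀, and such that every pair (b, c) with |b - b₀| < δ, |c - c₀| < ε, and (f(b) - f(a₀))/(b - a₀) = f'(c) satisfies c = C₁(b) or c = C₂(b). -/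
/-!
Expand `f` around `b₀` and `f'` around `c₀`, where `f''(c₀) = 0`:
`f b = f b₀ + f'(b₀) (b - b₀) + (b - b₀)² S b` and `f' c = f'(c₀) + (c - c₀)² R c` with `C¹`
remainders, `R c₀ = f'''(c₀) / 2` and `S b₀ = f''(b₀) / 2`. Using `f'(b₀) = f'(c₀)` and the mean
value equation at `b₀`, the mean value equation for `(b, c)` becomes
`(c - c₀)² R c = (b - b₀)² S b / (b - a₀)`. As `R c₀` and `S b₀` have the same sign, both sides
are squares of `C¹` functions, `ψ c = (c - c₀) √(R c / R c₀)` and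
`θ b = (b - b₀) √(S b / ((b - a₀) R c₀))`, so the equation reads `ψ c = ± θ b`. Since
`ψ'(c₀) = 1`, the inverse function theorem gives the two branches `c = ψ⁻¹ (± θ b)`.
-/

open Filter Topology Set

section ParametricIntegral

variable {E : Type*} [NormedAddCommGroup E] [NormedSpace ℝ E] {F F' : ℝ → ℝ → E} {a b : ℝ}

theorem hasDerivAt_intervalIntegral_of_continuous_deriv
    (hF : ∀ x, Continuous (F x)) (hF' : Continuous (Function.uncurry F'))
    (hFF' : ∀ x t, HasDerivAt (F · t) (F' x t) x) (x : ℝ) :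
    HasDerivAt (fun x ↦ ∫ t in a..b, F x t) (∫ t in a..b, F' x t) x := by
  obtain ⟨M, hM⟩ :=
    ((isCompact_closedBall x 1).prod isCompact_uIcc).exists_bound_of_continuousOn hF'.continuousOn
  refine (intervalIntegral.hasDerivAt_integral_of_dominated_loc_of_deriv_le (bound := fun _ ↦ M)
    (Metric.ball_mem_nhds x one_pos) (.of_forall fun y ↦ (hF y).aestronglyMeasurable)
    ((hF x).intervalIntegrable a b) (hF'.uncurry_left x).aestronglyMeasurable
    (MeasureTheory.ae_of_all _ fun t ht y hy ↦
      hM (y, t) ⟨Metric.ball_subset_closedBall hy, uIoc_subset_uIcc ht⟩)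
    intervalIntegrable_const (MeasureTheory.ae_of_all _ fun t _ y _ ↦ hFF' y t)).2

theorem contDiff_one_intervalIntegral_of_continuous_deriv
    (hF : ∀ x, Continuous (F x)) (hF' : Continuous (Function.uncurry F'))
    (hFF' : ∀ x t, HasDerivAt (F · t) (F' x t) x) :
    ContDiff ℝ 1 (fun x ↦ ∫ t in a..b, F x t) := by
  have hderiv := hasDerivAt_intervalIntegral_of_continuous_deriv (a := a) (b := b) hF hF' hFF'
  rw [contDiff_one_iff_deriv]
  refine ⟨fun x ↦ (hderiv x).differentiableAt, ?_⟩
  rw [funext fun x ↦ (hderiv x).deriv]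
  exact intervalIntegral.continuous_parametric_intervalIntegral_of_continuous' hF' a b

end ParametricIntegral

theorem eq_add_deriv_mul_add_sq_mul_integral {g : ℝ → ℝ} (hg : ContDiff ℝ 2 g) (x₀ x : ℝ) :
    g x = g x₀ + deriv g x₀ * (x - x₀) +
      (x - x₀) ^ 2 * ∫ t in (0 : ℝ)..1, (1 - t) * iteratedDeriv 2 g (x₀ + t * (x - x₀)) := by
  have := map_add_eq_sum_add_integral_iteratedFDeriv (n := 1) (x := x₀) (y := x - x₀)
    (fun t _ ↦ hg.contDiffAt)
  simp only [iteratedFDeriv_apply_eq_iteratedDeriv_mul_prod, Finset.sum_range_succ,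
    Finset.prod_const, Finset.card_univ, Fintype.card_fin, smul_eq_mul, Finset.range_one,
    Finset.sum_singleton, Nat.factorial_zero, Nat.factorial_one, Nat.cast_one, inv_one, pow_zero,
    pow_one, one_mul, iteratedDeriv_zero, iteratedDeriv_one, add_sub_cancel] at this
  rw [this, ← intervalIntegral.integral_const_mul]
  congr 1
  · ring
  · congr 1; ext t; ring

theorem exists_contDiff_one_sq_remainder {g : ℝ → ℝ} (hg : ContDiff ℝ 3 g) (x₀ : ℝ) :
    ∃ T : ℝ → ℝ, ContDiff ℝ 1 T ∧ T x₀ = iteratedDeriv 2 g x₀ / 2 ∧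
      ∀ x, g x = g x₀ + deriv g x₀ * (x - x₀) + (x - x₀) ^ 2 * T x := by
  refine ⟨_, ?_, ?_, eq_add_deriv_mul_add_sq_mul_integral (hg.of_le (by norm_num)) x₀⟩
  · have h2 : Continuous (iteratedDeriv 2 g) := hg.continuous_iteratedDeriv 2 (by norm_num)
    have h3 : Continuous (iteratedDeriv 3 g) := hg.continuous_iteratedDeriv 3 le_rfl
    refine contDiff_one_intervalIntegral_of_continuous_deriv
      (F' := fun x t ↦ (1 - t) * (iteratedDeriv 3 g (x₀ + t * (x - x₀)) * t))
      (fun x ↦ by fun_prop) (by fun_prop) fun x t ↦ ?_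
    have hg₂ : HasDerivAt (iteratedDeriv 2 g) (iteratedDeriv 3 g (x₀ + t * (x - x₀)))
        (x₀ + t * (x - x₀)) := by
      rw [iteratedDeriv_succ (n := 2)]
      exact ((hg.differentiable_iteratedDeriv 2 (by norm_num)) _).hasDerivAt
    have hline : HasDerivAt (fun x ↦ x₀ + t * (x - x₀)) t x := by
      simpa using (((hasDerivAt_id x).sub_const x₀).const_mul t).const_add x₀
    exact (hg₂.comp x hline).const_mul (1 - t)
  · have h : ∫ t in (0 : ℝ)..1, (1 - t) = 1 / 2 := by
      rw [intervalIntegral.integral_sub intervalIntegrable_const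
        intervalIntegral.intervalIntegrable_id]
      norm_num [integral_id]
    simp only [sub_self, mul_zero, add_zero, intervalIntegral.integral_mul_const, h]
    ring

theorem exists_contDiffAt_localInverse {𝕂 : Type*} [RCLike 𝕂] {ψ : 𝕂 → 𝕂} {ψ' c₀ : 𝕂}
    {n : WithTop ℕ∞} (hψ : ContDiffAt 𝕂 n ψ c₀) (hψ' : HasDerivAt ψ ψ' c₀) (hψ'0 : ψ' ≠ 0)
    (hn : n ≠ 0) :
    ∃ Φ : 𝕂 → 𝕂, ContDiffAt 𝕂 n Φ (ψ c₀) ∧ Φ (ψ c₀) = c₀ ∧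
      (∀ᶠ c in 𝓝 c₀, Φ (ψ c) = c) ∧ ∀ᶠ y in 𝓝 (ψ c₀), ψ (Φ y) = y := by
  let e : 𝕂 ≃L[𝕂] 𝕂 := ContinuousLinearEquiv.unitsEquivAut 𝕂 (Units.mk0 ψ' hψ'0)
  have hψe : HasFDerivAt ψ (e : 𝕂 →L[𝕂] 𝕂) c₀ := hψ'.hasFDerivAt
  have hstrict := hψ.hasStrictFDerivAt' hψe hn
  exact ⟨_, hψ.to_localInverse hψe hn, hstrict.localInverse_apply_image,
    hstrict.eventually_left_inverse, hstrict.eventually_right_inverse⟩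

def HasTwoC1BranchesAt (P : ℝ → ℝ → Prop) (b₀ c₀ : ℝ) : Prop :=
  ∃ δ > 0, ∃ ε > 0, ∃ C₁ C₂ : ℝ → ℝ,
    C₁ b₀ = c₀ ∧ C₂ b₀ = c₀ ∧
    ContDiffOn ℝ 1 C₁ (Ioo (b₀ - δ) (b₀ + δ)) ∧
    ContDiffOn ℝ 1 C₂ (Ioo (b₀ - δ) (b₀ + δ)) ∧
    (∀ b : ℝ, |b - b₀| < δ → P b (C₁ b)) ∧
    (∀ b : ℝ, |b - b₀| < δ → P b (C₂ b)) ∧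
    (∀ b : ℝ, |b - b₀| < δ → b ≠ b₀ → C₁ b ≠ C₂ b) ∧
    (∀ b c : ℝ, |b - b₀| < δ → |c - c₀| < ε → P b c → c = C₁ b ∨ c = C₂ b)

theorem hasTwoC1BranchesAt_of_eventually {P : ℝ → ℝ → Prop} {C₁ C₂ : ℝ → ℝ} {b₀ c₀ : ℝ}
    (hC₁ : C₁ b₀ = c₀) (hC₂ : C₂ b₀ = c₀)
    (hbranch : ∀ᶠ b in 𝓝 b₀, ContDiffAt ℝ 1 C₁ b ∧ ContDiffAt ℝ 1 C₂ b ∧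
      P b (C₁ b) ∧ P b (C₂ b) ∧ (b ≠ b₀ → C₁ b ≠ C₂ b))
    (huniq : ∀ᶠ p in 𝓝 b₀ ×ˢ 𝓝 c₀, P p.1 p.2 → p.2 = C₁ p.1 ∨ p.2 = C₂ p.1) :
    HasTwoC1BranchesAt P b₀ c₀ := by
  obtain ⟨δ₁, hδ₁, hbranchδ⟩ := Metric.eventually_nhds_iff.mp hbranch
  obtain ⟨δ₂, hδ₂, pc, hpc, huniqδ⟩ := Metric.eventually_nhds_prod_iff.mp huniq
  obtain ⟨ε, hε, hpcε⟩ := Metric.eventually_nhds_iff.mp hpc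
  have hbranch' : ∀ b, |b - b₀| < min δ₁ δ₂ → _ := fun b hb ↦
    hbranchδ (hb.trans_le (min_le_left ..))
  refine ⟨min δ₁ δ₂, by positivity, ε, hε, C₁, C₂, hC₁, hC₂, ?_, ?_,
    fun b hb ↦ (hbranch' b hb).2.2.1, fun b hb ↦ (hbranch' b hb).2.2.2.1,
    fun b hb ↦ (hbranch' b hb).2.2.2.2,
    fun b c hb hc ↦ huniqδ (hb.trans_le (min_le_right ..)) (hpcε hc)⟩
  · rw [← Real.ball_eq_Ioo]
    exact fun b hb ↦ (hbranch' b hb).1.contDiffWithinAt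
  · rw [← Real.ball_eq_Ioo]
    exact fun b hb ↦ (hbranch' b hb).2.1.contDiffWithinAt

theorem hasTwoC1BranchesAt_of_eventually_iff_sq_eq_sq {P : ℝ → ℝ → Prop} {ψ θ : ℝ → ℝ}
    {ψ' b₀ c₀ : ℝ} (hψ : ContDiffAt ℝ 1 ψ c₀) (hψ' : HasDerivAt ψ ψ' c₀) (hψ'0 : ψ' ≠ 0)
    (hψc₀ : ψ c₀ = 0) (hθ : ContDiffAt ℝ 1 θ b₀) (hθb₀ : θ b₀ = 0)
    (hθne : ∀ᶠ b in 𝓝[≠] b₀, θ b ≠ 0)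
    (hP : ∀ᶠ p in 𝓝 b₀ ×ˢ 𝓝 c₀, P p.1 p.2 ↔ ψ p.2 ^ 2 = θ p.1 ^ 2) :
    HasTwoC1BranchesAt P b₀ c₀ := by
  obtain ⟨Φ, hΦ, hΦ0, hΦψ, hψΦ⟩ := exists_contDiffAt_localInverse hψ hψ' hψ'0 one_ne_zero
  rw [hψc₀] at hΦ hΦ0 hψΦ
  have hθ0 : Tendsto θ (𝓝 b₀) (𝓝 0) := hθb₀ ▸ hθ.continuousAt.tendsto
  have hC₁ : ContDiffAt ℝ 1 (fun b ↦ Φ (θ b)) b₀ := (hθb₀ ▸ hΦ).comp b₀ hθ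
  have hC₂ : ContDiffAt ℝ 1 (fun b ↦ Φ (-θ b)) b₀ :=
    (show ContDiffAt ℝ 1 Φ (-θ b₀) by simpa [hθb₀] using hΦ).comp b₀ hθ.neg
  have hPC {C : ℝ → ℝ} (hC : ContDiffAt ℝ 1 C b₀) (hCb₀ : C b₀ = c₀) :
      ∀ᶠ b in 𝓝 b₀, P b (C b) ↔ ψ (C b) ^ 2 = θ b ^ 2 :=
    (tendsto_id.prodMk (hCb₀ ▸ hC.continuousAt.tendsto)).eventually hP
  refine hasTwoC1BranchesAt_of_eventually (C₁ := fun b ↦ Φ (θ b)) (C₂ := fun b ↦ Φ (-θ b))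
    (by simp [hθb₀, hΦ0]) (by simp [hθb₀, hΦ0]) ?_ ?_
  · filter_upwards [hC₁.eventually (by simp), hC₂.eventually (by simp), hθ0.eventually hψΦ,
      (by simpa using hθ0.neg : Tendsto (fun b ↦ -θ b) (𝓝 b₀) (𝓝 0)).eventually hψΦ,
      hPC hC₁ (by simp [hθb₀, hΦ0]), hPC hC₂ (by simp [hθb₀, hΦ0]),
      eventually_nhdsWithin_iff.mp hθne] with b hC₁b hC₂b hψC₁ hψC₂ hPC₁ hPC₂ hθb
    refine ⟨hC₁b, hC₂b, hPC₁.mpr (by rw [hψC₁]), hPC₂.mpr (by rw [hψC₂, neg_sq]),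
      fun hne hC ↦ hθb hne ?_⟩
    rw [hC, hψC₂] at hψC₁
    linarith
  · filter_upwards [hP, hΦψ.prod_inr _] with ⟨b, c⟩ hPbc hΦc hPbc'
    rcases sq_eq_sq_iff_eq_or_eq_neg.mp (hPbc.mp hPbc') with h | h
    · exact .inl (by rw [← hΦc, h])
    · exact .inr (by rw [← hΦc, h])

theorem hasDerivAt_sub_mul_of_continuousAt {𝕜 : Type*} [NontriviallyNormedField 𝕜] {u : 𝕜 → 𝕜}
    {x₀ : 𝕜} (hu : ContinuousAt u x₀) : HasDerivAt (fun x ↦ (x - x₀) * u x) (u x₀) x₀ := by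
  rw [hasDerivAt_iff_tendsto_slope]
  refine (hu.tendsto.mono_left nhdsWithin_le_nhds).congr' ?_
  filter_upwards [self_mem_nhdsWithin] with x hx
  rw [slope_def_field, sub_self, zero_mul, sub_zero, mul_div_cancel_left₀ _ (sub_ne_zero.2 hx)]

theorem contDiffAt_sub_mul_sqrt {u : ℝ → ℝ} {x₀ : ℝ} {n : WithTop ℕ∞} (hu : ContDiffAt ℝ n u x₀)
    (hu₀ : u x₀ ≠ 0) : ContDiffAt ℝ n (fun x ↦ (x - x₀) * √(u x)) x₀ :=
  (contDiffAt_id.sub contDiffAt_const).mul ((Real.contDiffAt_sqrt hu₀).comp x₀ hu)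

theorem hasTwoC1BranchesAt_of_eventually_iff_sq_mul_eq_sq_mul {P : ℝ → ℝ → Prop} {g h : ℝ → ℝ}
    {b₀ c₀ : ℝ} (hg : ContDiffAt ℝ 1 g c₀) (hh : ContDiffAt ℝ 1 h b₀) (hgh : 0 < g c₀ * h b₀)
    (hP : ∀ᶠ p in 𝓝 b₀ ×ˢ 𝓝 c₀, P p.1 p.2 ↔ (p.2 - c₀) ^ 2 * g p.2 = (p.1 - b₀) ^ 2 * h p.1) :
    HasTwoC1BranchesAt P b₀ c₀ := by
  set k := g c₀
  have hk : k ≠ 0 := left_ne_zero_of_mul hgh.ne'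
  have hg₀ : 0 < g c₀ / k := by rw [div_self hk]; exact one_pos
  have hh₀ : 0 < h b₀ / k := by
    rw [← mul_div_mul_left _ _ hk]; exact div_pos hgh (mul_self_pos.2 hk)
  have hgpos : ∀ᶠ c in 𝓝 c₀, 0 < g c / k :=
    (hg.continuousAt.div_const k).eventually (lt_mem_nhds hg₀)
  have hhpos : ∀ᶠ b in 𝓝 b₀, 0 < h b / k :=
    (hh.continuousAt.div_const k).eventually (lt_mem_nhds hh₀)
  refine hasTwoC1BranchesAt_of_eventually_iff_sq_eq_sq
    (contDiffAt_sub_mul_sqrt (hg.div_const k) hg₀.ne')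
    (hasDerivAt_sub_mul_of_continuousAt (hg.continuousAt.div_const k).sqrt)
    (Real.sqrt_pos.2 hg₀).ne' (by simp) (contDiffAt_sub_mul_sqrt (hh.div_const k) hh₀.ne')
    (by simp) ?_ ?_
  · filter_upwards [self_mem_nhdsWithin, eventually_nhdsWithin_of_eventually_nhds hhpos]
      with b hb hpos
    exact mul_ne_zero (sub_ne_zero.2 hb) (Real.sqrt_pos.2 hpos).ne'
  · filter_upwards [hP, hgpos.prod_inr _, hhpos.prod_inl _] with ⟨b, c⟩ hPbc hgc hhb
    rw [hPbc, mul_pow, mul_pow, Real.sq_sqrt hgc.le, Real.sq_sqrt hhb.le, ← mul_div_assoc,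
      ← mul_div_assoc, div_left_inj' hk]

theorem slope_eq_iff_sq_mul_eq_sq_mul {f f' R S : ℝ → ℝ} {a₀ b₀ c₀ b c : ℝ}
    (hR : f' c = f' c₀ + (c - c₀) ^ 2 * R c)
    (hS : f b = f b₀ + f' b₀ * (b - b₀) + (b - b₀) ^ 2 * S b)
    (hmv : (f b₀ - f a₀) / (b₀ - a₀) = f' c₀) (h1b : f' b₀ = f' c₀) (hab : a₀ ≠ b₀)
    (hb : b ≠ a₀) :
    (f b - f a₀) / (b - a₀) = f' c ↔ (c - c₀) ^ 2 * R c = (b - b₀) ^ 2 * (S b / (b - a₀)) := by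
  rw [div_eq_iff (sub_ne_zero.2 hab.symm)] at hmv
  rw [div_eq_iff (sub_ne_zero.2 hb), mul_div_assoc', eq_div_iff (sub_ne_zero.2 hb), hR, hS, h1b]
  constructor <;> intro h <;> linear_combination -h + hmv

theorem mean_value_abscissa_two_branches_of_same_signs_general
    (f : ℝ → ℝ) (hf : ContDiff ℝ 4 f)
    (a₀ b₀ c₀ : ℝ) (hab : a₀ < b₀)
    (hmv : (f b₀ - f a₀) / (b₀ - a₀) = deriv f c₀)
    (h2c : iteratedDeriv 2 f c₀ = 0)
    (h1b : deriv f b₀ = deriv f c₀)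
    (hsign : 0 < iteratedDeriv 2 f b₀ * iteratedDeriv 3 f c₀) :
    ∃ δ > 0, ∃ ε > 0, ∃ C₁ C₂ : ℝ → ℝ,
      C₁ b₀ = c₀ ∧ C₂ b₀ = c₀ ∧
      ContDiffOn ℝ 1 C₁ (Set.Ioo (b₀ - δ) (b₀ + δ)) ∧
      ContDiffOn ℝ 1 C₂ (Set.Ioo (b₀ - δ) (b₀ + δ)) ∧
      (∀ b : ℝ, |b - b₀| < δ → (f b - f a₀) / (b - a₀) = deriv f (C₁ b)) ∧
      (∀ b : ℝ, |b - b₀| < δ → (f b - f a₀) / (b - a₀) = deriv f (C₂ b)) ∧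
      (∀ b : ℝ, |b - b₀| < δ → b ≠ b₀ → C₁ b ≠ C₂ b) ∧
      (∀ b c : ℝ, |b - b₀| < δ → |c - c₀| < ε →
        (f b - f a₀) / (b - a₀) = deriv f c → c = C₁ b ∨ c = C₂ b) := by
  obtain ⟨R, hR, hR₀, hfR⟩ := exists_contDiff_one_sq_remainder (hf.deriv' (n := 3)) c₀
  obtain ⟨S, hS, hSb₀, hfS⟩ := exists_contDiff_one_sq_remainder (hf.of_le (by norm_num)) b₀
  have hf''c₀ : deriv (deriv f) c₀ = 0 := by rw [← h2c, iteratedDeriv_succ', iteratedDeriv_one]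
  have hRc₀ : R c₀ = iteratedDeriv 3 f c₀ / 2 := by rw [hR₀, ← iteratedDeriv_succ']
  simp only [hf''c₀, zero_mul, add_zero] at hfR
  refine hasTwoC1BranchesAt_of_eventually_iff_sq_mul_eq_sq_mul
    (P := fun b c ↦ (f b - f a₀) / (b - a₀) = deriv f c) (g := R)
    (h := fun b ↦ S b / (b - a₀)) hR.contDiffAt
    (hS.contDiffAt.div (contDiffAt_id.sub contDiffAt_const) (sub_ne_zero.2 hab.ne')) ?_ ?_
  · rw [hRc₀, hSb₀, show iteratedDeriv 3 f c₀ / 2 * (iteratedDeriv 2 f b₀ / 2 / (b₀ - a₀))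
      = iteratedDeriv 2 f b₀ * iteratedDeriv 3 f c₀ / 4 / (b₀ - a₀) by ring]
    exact div_pos (div_pos hsign four_pos) (sub_pos.2 hab)
  · filter_upwards [(eventually_ne_nhds hab.ne').prod_inl _] with ⟨b, c⟩ hb
    exact slope_eq_iff_sq_mul_eq_sq_mul (hfR c) (hfS b) hmv h1b hab.ne hb

/-- Theorem (main II, same signs): if `f` is four-times continuously differentiable,
`c₀` is a mean value abscissa for `f` on `[a₀, b₀]` with `f''(c₀) = 0`,
`f'(b₀) = f'(c₀)`, `f''(b₀) ≠ 0`, `f'''(c₀) ≠ 0`, and `f''(b₀)` and `f'''(c₀)` have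
the same sign, then there are exactly two continuously differentiable local choices
`c = C₁(b)` and `c = C₂(b)` of mean value abscissa through `c₀`, and no other nearby
solutions. -/
theorem mean_value_abscissa_two_branches_of_same_signs
    (f : ℝ → ℝ) (hf : ContDiff ℝ 4 f)
    (a₀ b₀ c₀ : ℝ) (hab : a₀ < b₀) (hc : c₀ ∈ Set.Ioo a₀ b₀)
    (hmv : (f b₀ - f a₀) / (b₀ - a₀) = deriv f c₀)
    (h2c : iteratedDeriv 2 f c₀ = 0)
    (h1b : deriv f b₀ = deriv f c₀)
    (h2b : iteratedDeriv 2 f b₀ ≠ 0)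
    (h3c : iteratedDeriv 3 f c₀ ≠ 0)
    (hsign : 0 < iteratedDeriv 2 f b₀ * iteratedDeriv 3 f c₀) :
    ∃ δ > 0, ∃ ε > 0, ∃ C₁ C₂ : ℝ → ℝ,
      C₁ b₀ = c₀ ∧ C₂ b₀ = c₀ ∧
      ContDiffOn ℝ 1 C₁ (Set.Ioo (b₀ - δ) (b₀ + δ)) ∧
      ContDiffOn ℝ 1 C₂ (Set.Ioo (b₀ - δ) (b₀ + δ)) ∧
      (∀ b : ℝ, |b - b₀| < δ → (f b - f a₀) / (b - a₀) = deriv f (C₁ b)) ∧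
      (∀ b : ℝ, |b - b₀| < δ → (f b - f a₀) / (b - a₀) = deriv f (C₂ b)) ∧
      (∀ b : ℝ, |b - b₀| < δ → b ≠ b₀ → C₁ b ≠ C₂ b) ∧
      (∀ b c : ℝ, |b - b₀| < δ → |c - c₀| < ε →
        (f b - f a₀) / (b - a₀) = deriv f c → c = C₁ b ∨ c = C₂ b) :=
  mean_value_abscissa_two_branches_of_same_signs_general f hf a₀ b₀ c₀ hab hmv h2c h1b hsign
end

section
/- Let f be a non-constant real analytic function on an open interval containing [a₀, b₀], with a₀ < b₀ and f(a₀) = f(b₀) = 0. Then there exists a mean value abscissa c₀ ∈ (a₀, b₀) for f on [a₀, b₀] such that f'(c₀) = 0 and the smallest integer k ≥ 1 with f^{(k)}(c₀) ≠ 0 is even (equivalently, the order of vanishing of f' at c₀ is odd). -/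
/-!
By Rolle's theorem `f` has a local extremum at some `c ∈ (a₀, b₀)`, so `f'(c) = 0` and `c` is a
mean value abscissa. Near `c` write `f z - f c = (z - c)^n h z` with `h c ≠ 0`, where `n` is the
(finite, by the identity theorem) order of `f - f c` at `c`; the first nonvanishing derivative of `f`
at `c` is `f^{(n)}`. If `n` were odd, `(f (c + t) - f c) (f (c - t) - f c) = -t^{2n} h (c + t) h (c - t)`
would be negative for small `t ≠ 0`, whereas at an extremum both factors have the same sign.
-/

open Filter Topology Set

section IteratedDeriv

variable {𝕜 E : Type*} [NontriviallyNormedField 𝕜] [NormedAddCommGroup E] [NormedSpace 𝕜 E]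

theorem iteratedDeriv_fun_sub_const {n : ℕ} (hn : 0 < n) (f : 𝕜 → E) (a : E) (x : 𝕜) :
    iteratedDeriv n (fun z => f z - a) x = iteratedDeriv n f x := by
  obtain ⟨m, rfl⟩ := Nat.exists_eq_succ_of_ne_zero hn.ne'
  have hderiv : deriv (fun z => f z - a) = deriv f := funext fun _ => deriv_sub_const a
  rw [iteratedDeriv_succ', iteratedDeriv_succ', hderiv]

theorem AnalyticAt.iteratedDeriv_ne_zero_of_analyticOrderAt_eq [CharZero 𝕜] [CompleteSpace E]
    {f : 𝕜 → E} {z₀ : 𝕜} {n : ℕ} (hf : AnalyticAt 𝕜 f z₀) (hn : analyticOrderAt f z₀ = n) :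
    iteratedDeriv n f z₀ ≠ 0 := by
  intro hzero
  have hle : ((n + 1 : ℕ) : ℕ∞) ≤ analyticOrderAt f z₀ := by
    refine (natCast_le_analyticOrderAt_iff_iteratedDeriv_eq_zero hf).2 fun i hi => ?_
    rcases Nat.lt_succ_iff_lt_or_eq.1 hi with hi | rfl
    · exact (natCast_le_analyticOrderAt_iff_iteratedDeriv_eq_zero hf).1 hn.ge i hi
    · exact hzero
  rw [hn, Nat.cast_le] at hle
  omega

theorem AnalyticOnNhd.analyticOrderAt_sub_ne_top {f : 𝕜 → E} {U : Set 𝕜} {c : 𝕜}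
    (hf : AnalyticOnNhd 𝕜 f U) (hU : IsPreconnected U) (hc : c ∈ U)
    (hnc : ∃ x ∈ U, ∃ y ∈ U, f x ≠ f y) :
    analyticOrderAt (f · - f c) c ≠ ⊤ := by
  intro htop
  have hconst : EqOn f (fun _ => f c) U :=
    hf.eqOn_of_preconnected_of_eventuallyEq analyticOnNhd_const hU hc
      ((analyticOrderAt_eq_top.1 htop).mono fun _ hz => sub_eq_zero.1 hz)
  obtain ⟨x, hx, y, hy, hxy⟩ := hnc
  exact hxy ((hconst hx).trans (hconst hy).symm)

end IteratedDeriv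

section LocalExtr

variable {g : ℝ → ℝ} {c : ℝ}

theorem tendsto_const_add_nhds_zero (c : ℝ) : Tendsto (c + ·) (𝓝 0) (𝓝 c) := by
  simpa using (continuous_const_add c).tendsto 0

theorem tendsto_const_sub_nhds_zero (c : ℝ) : Tendsto (c - ·) (𝓝 0) (𝓝 c) := by
  simpa using (continuous_sub_left c).tendsto 0

theorem IsLocalExtr.eventually_nonneg_mul_sub_sub (hext : IsLocalExtr g c) :
    ∀ᶠ t in 𝓝 0, 0 ≤ (g (c + t) - g c) * (g (c - t) - g c) := by
  have hp := tendsto_const_add_nhds_zero c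
  have hm := tendsto_const_sub_nhds_zero c
  rcases hext with hmin | hmax
  · filter_upwards [hp.eventually hmin, hm.eventually hmin] with t h₁ h₂
    exact mul_nonneg (sub_nonneg.2 h₁) (sub_nonneg.2 h₂)
  · filter_upwards [hp.eventually hmax, hm.eventually hmax] with t h₁ h₂
    exact mul_nonneg_of_nonpos_of_nonpos (sub_nonpos.2 h₁) (sub_nonpos.2 h₂)

theorem IsLocalExtr.even_analyticOrderAt_sub {n : ℕ} (hext : IsLocalExtr g c)
    (hn : analyticOrderAt (g · - g c) c = n) : Even n := by
  by_cases hg : AnalyticAt ℝ (g · - g c) c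
  swap
  · rw [analyticOrderAt_of_not_analyticAt hg] at hn
    obtain rfl : n = 0 := by exact_mod_cast hn.symm
    exact Even.zero
  obtain ⟨h, hh, hhc, hfac⟩ := hg.analyticOrderAt_eq_natCast.1 hn
  have hprod_eq : ∀ᶠ t in 𝓝 0, (g (c + t) - g c) * (g (c - t) - g c) =
      (-1) ^ n * ((t ^ n) ^ 2 * (h (c + t) * h (c - t))) := by
    filter_upwards [(tendsto_const_add_nhds_zero c).eventually hfac,
      (tendsto_const_sub_nhds_zero c).eventually hfac] with t h₁ h₂
    rw [h₁, h₂, smul_eq_mul, smul_eq_mul]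
    ring
  have hh_pos : ∀ᶠ t in 𝓝 0, 0 < h (c + t) * h (c - t) := by
    have hlim : Tendsto (fun t => h (c + t) * h (c - t)) (𝓝 0) (𝓝 (h c * h c)) :=
      (hh.continuousAt.tendsto.comp (tendsto_const_add_nhds_zero c)).mul
        (hh.continuousAt.tendsto.comp (tendsto_const_sub_nhds_zero c))
    exact hlim.eventually (eventually_gt_nhds (mul_self_pos.2 hhc))
  obtain ⟨t, ht_ne, hnonneg, heq, hpos⟩ :=
    ((eventually_mem_nhdsWithin (s := {0}ᶜ)).and <| nhdsWithin_le_nhds <|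
      hext.eventually_nonneg_mul_sub_sub.and (hprod_eq.and hh_pos)).exists
  have hsign : 0 ≤ (-1 : ℝ) ^ n := by
    have ht : t ≠ 0 := ht_ne
    rw [heq] at hnonneg
    exact nonneg_of_mul_nonneg_left hnonneg (mul_pos (by positivity) hpos)
  by_contra hodd
  rw [(Nat.not_even_iff_odd.1 hodd).neg_one_pow] at hsign
  norm_num at hsign

end LocalExtr

/-- Lemma: if `f` is a non-constant real analytic function on an open interval
containing `[a₀, b₀]` with `f(a₀) = f(b₀) = 0`, then there is a mean value abscissa
`c₀ ∈ (a₀, b₀)` for `f` on `[a₀, b₀]` with `f'(c₀) = 0` such that the smallest `k ≥ 1`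
with `f^(k)(c₀) ≠ 0` is even (i.e. the order of vanishing of `f'` at `c₀` is odd). -/
theorem exists_abscissa_even_vanishing_order
    (f : ℝ → ℝ) (a₀ b₀ A B : ℝ)
    (hab : a₀ < b₀) (hA : A < a₀) (hB : b₀ < B)
    (hf : ∀ x ∈ Set.Ioo A B, AnalyticAt ℝ f x)
    (hnc : ∃ x ∈ Set.Ioo A B, ∃ y ∈ Set.Ioo A B, f x ≠ f y)
    (ha : f a₀ = 0) (hb : f b₀ = 0) :
    ∃ c₀ ∈ Set.Ioo a₀ b₀,
      (f b₀ - f a₀) / (b₀ - a₀) = deriv f c₀ ∧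
      deriv f c₀ = 0 ∧
      ∃ k : ℕ, 1 ≤ k ∧ Even k ∧
        iteratedDeriv k f c₀ ≠ 0 ∧
        ∀ j : ℕ, 1 ≤ j → j < k → iteratedDeriv j f c₀ = 0 := by
  have hsub : Icc a₀ b₀ ⊆ Ioo A B := Icc_subset_Ioo hA hB
  obtain ⟨c, hc, hext⟩ := exists_isLocalExtr_Ioo hab
    (fun x hx => (hf x (hsub hx)).continuousAt.continuousWithinAt) (ha.trans hb.symm)
  have hcU : c ∈ Ioo A B := hsub (Ioo_subset_Icc_self hc)
  have hg : AnalyticAt ℝ (f · - f c) c := (hf c hcU).fun_sub analyticAt_const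
  obtain ⟨n, hn⟩ := ENat.ne_top_iff_exists.1
    (AnalyticOnNhd.analyticOrderAt_sub_ne_top hf isPreconnected_Ioo hcU hnc)
  have hn_pos : 0 < n := by
    have hne := hg.analyticOrderAt_ne_zero.2 (sub_self _)
    rw [← hn, Nat.cast_ne_zero] at hne
    exact Nat.pos_of_ne_zero hne
  have hderiv : deriv f c = 0 := hext.deriv_eq_zero
  refine ⟨c, hc, by rw [ha, hb, hderiv, sub_self, zero_div], hderiv, n, hn_pos,
    hext.even_analyticOrderAt_sub hn.symm, ?_, fun j hj hjn => ?_⟩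
  · rw [← iteratedDeriv_fun_sub_const hn_pos]
    exact hg.iteratedDeriv_ne_zero_of_analyticOrderAt_eq hn.symm
  · rw [← iteratedDeriv_fun_sub_const hj]
    exact (natCast_le_analyticOrderAt_iff_iteratedDeriv_eq_zero hg).1 hn.le j hjn
end
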